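/- arXiv:2601.13822 — 11 statements merged into one kernel-verified Lean document; each statement's English description precedes it below -/
import Mathlib

section
/- Let G be a finite simple graph, φ a partial proper edge-coloring of G, and let e = (v, u_1) and e* = (v*, u*_1) be two distinct uncolored edges with dist_G(e, e*) ≥ 3. Then any fan whose uncolored edge is e and any fan whose uncolored edge is e* are disjoint: if ⟨u_1, …, u_k⟩ is a fan of v with first vertex u_1 and ⟨u*_1, …, u*_l⟩ is a fan of v* with first vertex u*_1, then {v, u_1, …, u_k} ∩ {v*, u*_1, …, u*_l} = ∅ (and the same holds for any choice of centers among the endpoints of e and e*). -/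
/-- A partial proper edge-coloring of `G` with colors `Fin K`. -/
def IsPartialProperEdgeColoring {V : Type*} (G : SimpleGraph V) {K : ℕ}
    (φ : Sym2 V → Option (Fin K)) : Prop :=
  (∀ e : Sym2 V, (φ e).isSome → e ∈ G.edgeSet) ∧
  ∀ e₁ e₂ : Sym2 V, e₁ ≠ e₂ → (∃ x, x ∈ e₁ ∧ x ∈ e₂) →
    ∀ c : Fin K, φ e₁ = some c → φ e₂ ≠ some c

/-- The color `c` is missing at the vertex `w`. -/
def MissingAt {V : Type*} {K : ℕ} (φ : Sym2 V → Option (Fin K)) (w : V) (c : Fin K) : Prop :=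
  ∀ e : Sym2 V, w ∈ e → φ e ≠ some c

/-- `⟨u 0, …, u k⟩` is a fan of the vertex `v` with designated missing colors `mv` and `m`. -/
structure IsFan {V : Type*} (G : SimpleGraph V) {K : ℕ}
    (φ : Sym2 V → Option (Fin K)) (v : V) {k : ℕ}
    (u : Fin (k + 1) → V) (mv : Fin K) (m : Fin (k + 1) → Fin K) : Prop where
  inj : Function.Injective u
  adj : ∀ i, G.Adj v (u i)
  missing_center : MissingAt φ v mv
  missing : ∀ i, MissingAt φ (u i) (m i)
  uncolored : φ s(v, u 0) = none
  colored : ∀ i : Fin k, φ s(v, u i.succ) = some (m i.castSucc)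

/-! A fan lies in the closed neighbourhood of its center, so two fans share a vertex only if
their centers are at distance at most `2`. -/

lemma SimpleGraph.ne_of_edist_le_one_of_three_le_edist {V : Type*} {G : SimpleGraph V}
    {v v' a b : V} (ha : G.edist v a ≤ 1) (hb : G.edist v' b ≤ 1) (h : 3 ≤ G.edist v v') :
    a ≠ b := by
  rintro rfl
  have h2 : G.edist v v' ≤ 2 :=
    calc G.edist v v' ≤ G.edist v a + G.edist a v' := G.edist_triangle
      _ ≤ 1 + 1 := add_le_add ha (by rwa [SimpleGraph.edist_comm])
      _ = 2 := by norm_num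
  exact absurd (h.trans h2) (by norm_num)

lemma IsFan.edist_le_one {V : Type*} {G : SimpleGraph V} {K : ℕ}
    {φ : Sym2 V → Option (Fin K)} {v : V} {k : ℕ} {u : Fin (k + 1) → V} {mv : Fin K}
    {m : Fin (k + 1) → Fin K} (hf : IsFan G φ v u mv m) (i : Fin (k + 1)) :
    G.edist v (u i) ≤ 1 :=
  SimpleGraph.edist_le_one_iff_adj_or_eq.mpr (Or.inl (hf.adj i))

theorem stmt_3_general {V : Type*} (G : SimpleGraph V) (K : ℕ)
    (φ : Sym2 V → Option (Fin K))
    (v u v' u' : V)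
    (hdist : ∀ x y : V, x ∈ s(v, u) → y ∈ s(v', u') → 3 ≤ G.edist x y)
    {k k' : ℕ} (us : Fin (k + 1) → V) (mv : Fin K) (m : Fin (k + 1) → Fin K)
    (us' : Fin (k' + 1) → V) (mv' : Fin K) (m' : Fin (k' + 1) → Fin K)
    (hf : IsFan G φ v us mv m)
    (hf' : IsFan G φ v' us' mv' m') :
    v ≠ v' ∧ (∀ j, v ≠ us' j) ∧ (∀ i, us i ≠ v') ∧ ∀ i j, us i ≠ us' j := by
  have hvv' : 3 ≤ G.edist v v' := hdist v v' (Sym2.mem_mk_left v u) (Sym2.mem_mk_left v' u')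
  have hv : G.edist v v ≤ 1 := by simp
  have hv' : G.edist v' v' ≤ 1 := by simp
  open SimpleGraph in
  exact ⟨ne_of_edist_le_one_of_three_le_edist hv hv' hvv',
    fun j => ne_of_edist_le_one_of_three_le_edist hv (hf'.edist_le_one j) hvv',
    fun i => ne_of_edist_le_one_of_three_le_edist (hf.edist_le_one i) hv' hvv',
    fun i j => ne_of_edist_le_one_of_three_le_edist (hf.edist_le_one i) (hf'.edist_le_one j) hvv'⟩

/-- If `e = (v, u)` and `e* = (v', u')` are distinct uncolored edges at
edge-distance at least `3` (every endpoint of `e` is at graph distance at least `3` from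
every endpoint of `e*`, distance being `∞` for unreachable pairs), then any fan with
uncolored edge `e` and any fan with uncolored edge `e*` are vertex-disjoint; this holds
for any choice of centers among the endpoints of `e` and `e*`. -/
theorem stmt_3 {V : Type*} (G : SimpleGraph V) (K : ℕ)
    (φ : Sym2 V → Option (Fin K)) (hφ : IsPartialProperEdgeColoring G φ)
    (v u v' u' : V) (h1 : G.Adj v u) (h2 : G.Adj v' u')
    (hne : s(v, u) ≠ s(v', u'))
    (hunc : φ s(v, u) = none) (hunc' : φ s(v', u') = none)
    (hdist : ∀ x y : V, x ∈ s(v, u) → y ∈ s(v', u') → 3 ≤ G.edist x y)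
    {k k' : ℕ} (us : Fin (k + 1) → V) (mv : Fin K) (m : Fin (k + 1) → Fin K)
    (us' : Fin (k' + 1) → V) (mv' : Fin K) (m' : Fin (k' + 1) → Fin K)
    (hf : IsFan G φ v us mv m) (hstart : us 0 = u)
    (hf' : IsFan G φ v' us' mv' m') (hstart' : us' 0 = u') :
    v ≠ v' ∧ (∀ j, v ≠ us' j) ∧ (∀ i, us i ≠ v') ∧ ∀ i j, us i ≠ us' j :=
  stmt_3_general G K φ v u v' u' hdist us mv m us' mv' m' hf hf'
end

section
/- Let G be a finite simple graph with maximum degree Δ ≥ 1, let φ be a partial proper edge-coloring of G, and let F be a subset of the uncolored edges that forms a matching in G. Then in the fan-graph G^(F), every vertex (i.e., every edge of F) has degree at most 2(Δ − 1)^2. -/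
/-- The distance between two edges: the minimum, over endpoints `x` of `e₁` and `y` of
`e₂`, of the (extended, `∞` if unreachable) graph distance between `x` and `y`. -/
noncomputable def edgeDist {V : Type*} (G : SimpleGraph V) (e₁ e₂ : Sym2 V) : ℕ∞ :=
  ⨅ x ∈ e₁, ⨅ y ∈ e₂, G.edist x y

/-- The fan-graph `G^(F)` on a set `F` of edges of `G`: two distinct members of `F` are
adjacent iff they lie at edge-distance at most `2` in `G` (elements of `Sym2 V` outside
`F` are isolated vertices). -/
def fanGraph {V : Type*} (G : SimpleGraph V) (F : Set (Sym2 V)) : SimpleGraph (Sym2 V) :=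
  SimpleGraph.fromRel (fun e₁ e₂ => e₁ ∈ F ∧ e₂ ∈ F ∧ edgeDist G e₁ e₂ ≤ 2)

/-!
Let `uv ∈ F`. An edge `ab ∈ F` adjacent to `uv` in the fan-graph is disjoint from `uv`, and some
endpoint of `uv` is at distance at most `2` from some endpoint of `ab`. Inspecting the shortest
path shows that `a` or `b` is then a vertex `y ≠ x` adjacent to a neighbour `w` of `x` with
`w ≠ x'`, where `{x, x'} = {u, v}`; there are at most `2(Δ - 1)²` such vertices `y`. Since `F` is a
matching, distinct neighbours of `uv` yield distinct vertices `y`.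
-/

lemma Set.ncard_le_card_of_forall_exists_mem {α β : Type*} [Membership α β] {S : Set β}
    {Y : Finset α} (hS : ∀ x, ∀ s ∈ S, ∀ t ∈ S, x ∈ s → x ∈ t → s = t)
    (hY : ∀ s ∈ S, ∃ y ∈ s, y ∈ Y) : S.ncard ≤ Y.card := by
  rcases S.eq_empty_or_nonempty with rfl | ⟨s, hs⟩
  · simp
  have : Nonempty α := ⟨(hY s hs).choose⟩
  choose! g hgs hgY using hY
  calc S.ncard ≤ (Y : Set α).ncard :=
        Set.ncard_le_ncard_of_injOn g hgY
          (fun s hs t ht hst ↦ hS _ s hs t ht (hgs s hs) (hst ▸ hgs t ht)) Y.finite_toSet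
    _ = Y.card := Set.ncard_coe_finset Y

namespace SimpleGraph

variable {V : Type*} {G : SimpleGraph V} {u v a b : V}

lemma edist_le_two_iff : G.edist u v ≤ 2 ↔ u = v ∨ G.Adj u v ∨ ∃ w, G.Adj u w ∧ G.Adj w v := by
  rw [← not_lt, two_lt_edist_iff, Set.eq_empty_iff_forall_notMem]
  simp only [mem_commonNeighbors, G.adj_comm v, not_and_or, not_forall, not_not, ne_eq, not_or]

end SimpleGraph

open SimpleGraph

section EdgeDist

variable {V : Type*} {G : SimpleGraph V}

lemma edgeDist_le_iff {e f : Sym2 V} {n : ℕ∞} :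
    edgeDist G e f ≤ n ↔ ∃ x ∈ e, ∃ y ∈ f, G.edist x y ≤ n := by
  induction e using Sym2.ind
  induction f using Sym2.ind
  simp only [edgeDist, Sym2.mem_iff, iInf_or, iInf_inf_eq, iInf_iInf_eq_left, inf_le_iff,
    exists_eq_or_imp, exists_eq_left]
  tauto

lemma edgeDist_comm (e f : Sym2 V) : edgeDist G e f = edgeDist G f e := by
  refine eq_of_forall_ge_iff fun n ↦ ?_
  simp only [edgeDist_le_iff]
  exact ⟨fun ⟨x, hx, y, hy, h⟩ ↦ ⟨y, hy, x, hx, edist_comm ▸ h⟩,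
    fun ⟨x, hx, y, hy, h⟩ ↦ ⟨y, hy, x, hx, edist_comm ▸ h⟩⟩

lemma fanGraph_adj {F : Set (Sym2 V)} {e f : Sym2 V} :
    (fanGraph G F).Adj e f ↔ e ≠ f ∧ e ∈ F ∧ f ∈ F ∧ edgeDist G e f ≤ 2 := by
  rw [fanGraph, fromRel_adj, edgeDist_comm f e]
  tauto

end EdgeDist

namespace SimpleGraph

variable {V : Type*} [Fintype V] [DecidableEq V] {G : SimpleGraph V} [DecidableRel G.Adj]
  {u v a b : V}

variable (G) in
def twoStepFinset (u v : V) : Finset V :=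
  ((G.neighborFinset u).erase v).biUnion fun w ↦ (G.neighborFinset w).erase u

variable (G) in
def edgeTwoStepFinset (u v : V) : Finset V :=
  G.twoStepFinset u v ∪ G.twoStepFinset v u

lemma mem_twoStepFinset {y : V} :
    y ∈ G.twoStepFinset u v ↔ ∃ w, (w ≠ v ∧ G.Adj u w) ∧ y ≠ u ∧ G.Adj w y := by
  simp [twoStepFinset]

lemma edgeTwoStepFinset_comm : G.edgeTwoStepFinset u v = G.edgeTwoStepFinset v u :=
  Finset.union_comm _ _

lemma card_erase_neighborFinset_le (huv : G.Adj u v) :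
    ((G.neighborFinset u).erase v).card ≤ G.maxDegree - 1 := by
  rw [Finset.card_erase_of_mem (by simpa using huv), card_neighborFinset_eq_degree]
  exact Nat.sub_le_sub_right (G.degree_le_maxDegree u) 1

lemma card_twoStepFinset_le (huv : G.Adj u v) :
    (G.twoStepFinset u v).card ≤ (G.maxDegree - 1) ^ 2 := by
  rw [sq]
  refine (Finset.card_biUnion_le_card_mul _ _ _ fun w hw ↦ ?_).trans
    (Nat.mul_le_mul_right _ (card_erase_neighborFinset_le huv))
  simp only [Finset.mem_erase, mem_neighborFinset] at hw
  exact card_erase_neighborFinset_le hw.2.symm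

lemma card_edgeTwoStepFinset_le (huv : G.Adj u v) :
    (G.edgeTwoStepFinset u v).card ≤ 2 * (G.maxDegree - 1) ^ 2 := by
  have := card_twoStepFinset_le huv
  have := card_twoStepFinset_le huv.symm
  have := Finset.card_union_le (G.twoStepFinset u v) (G.twoStepFinset v u)
  rw [edgeTwoStepFinset]
  omega

lemma exists_mem_edgeTwoStepFinset_of_edist_le_two (hab : G.Adj a b) (hau : a ≠ u) (hav : a ≠ v)
    (hbu : b ≠ u) (hbv : b ≠ v) (hd : G.edist u a ≤ 2) :
    ∃ y ∈ s(a, b), y ∈ G.edgeTwoStepFinset u v := by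
  simp only [Sym2.mem_iff, exists_eq_or_imp, exists_eq_left, edgeTwoStepFinset,
    Finset.mem_union, mem_twoStepFinset]
  rcases edist_le_two_iff.mp hd with rfl | hua | ⟨w, huw, hwa⟩
  · exact absurd rfl hau
  · exact Or.inr (Or.inl ⟨a, ⟨hav, hua⟩, hbu, hab⟩)
  · by_cases hwv : w = v
    · subst hwv
      exact Or.inr (Or.inr ⟨a, ⟨hau, hwa⟩, hbv, hab⟩)
    · exact Or.inl (Or.inl ⟨w, ⟨hwv, huw⟩, hau, hwa⟩)

lemma exists_mem_edgeTwoStepFinset_of_edgeDist_le_two {f : Sym2 V} (hf : f ∈ G.edgeSet)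
    (hdisj : ∀ x ∈ f, x ∉ s(u, v)) (hd : edgeDist G s(u, v) f ≤ 2) :
    ∃ y ∈ f, y ∈ G.edgeTwoStepFinset u v := by
  induction f using Sym2.ind with | _ a b => ?_
  have hab : G.Adj a b := hf
  have ha := hdisj a (Sym2.mem_mk_left a b)
  have hb := hdisj b (Sym2.mem_mk_right a b)
  simp only [Sym2.mem_iff, not_or] at ha hb
  obtain ⟨x, hx, y, hy, hxy⟩ := edgeDist_le_iff.mp hd
  rcases Sym2.mem_iff.mp hx with rfl | rfl <;> rcases Sym2.mem_iff.mp hy with rfl | rfl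
  · exact exists_mem_edgeTwoStepFinset_of_edist_le_two hab ha.1 ha.2 hb.1 hb.2 hxy
  · rw [Sym2.eq_swap]
    exact exists_mem_edgeTwoStepFinset_of_edist_le_two hab.symm hb.1 hb.2 ha.1 ha.2 hxy
  · rw [edgeTwoStepFinset_comm]
    exact exists_mem_edgeTwoStepFinset_of_edist_le_two hab ha.2 ha.1 hb.2 hb.1 hxy
  · rw [edgeTwoStepFinset_comm, Sym2.eq_swap]
    exact exists_mem_edgeTwoStepFinset_of_edist_le_two hab.symm hb.2 hb.1 ha.2 ha.1 hxy

end SimpleGraph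

theorem stmt_4_general {V : Type*} [Fintype V] (G : SimpleGraph V)
    [DecidableRel G.Adj] (Δ : ℕ) (hΔ : G.maxDegree = Δ)
    (F : Set (Sym2 V)) (hFE : ∀ e ∈ F, e ∈ G.edgeSet)
    (hM : ∀ x : V, ∀ e₁ ∈ F, ∀ e₂ ∈ F, x ∈ e₁ → x ∈ e₂ → e₁ = e₂) :
    ∀ e ∈ F, ((fanGraph G F).neighborSet e).ncard ≤ 2 * (Δ - 1) ^ 2 := by
  classical
  intro e he
  induction e using Sym2.ind with | _ u v => ?_
  subst hΔ
  have mem_F {f} (hf : f ∈ (fanGraph G F).neighborSet s(u, v)) : f ∈ F :=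
    (fanGraph_adj.mp hf).2.2.1
  refine (Set.ncard_le_card_of_forall_exists_mem
    (fun x s hs t ht ↦ hM x s (mem_F hs) t (mem_F ht)) fun f hf ↦ ?_).trans
    (card_edgeTwoStepFinset_le (hFE _ he))
  obtain ⟨hne, -, hfF, hd⟩ := fanGraph_adj.mp hf
  exact exists_mem_edgeTwoStepFinset_of_edgeDist_le_two (hFE f hfF)
    (fun x hx hxe ↦ hne (hM x _ he f hfF hxe hx)) hd

/-- If `G` has maximum degree `Δ ≥ 1`, `φ` is a partial proper
edge-coloring of `G`, and `F` is a matching consisting of uncolored edges, then every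
vertex of the fan-graph `G^(F)` (i.e. every edge of `F`) has degree at most `2(Δ-1)²`. -/
theorem stmt_4 {V : Type*} [Fintype V] [DecidableEq V] (G : SimpleGraph V)
    [DecidableRel G.Adj] (Δ : ℕ) (hΔ1 : 1 ≤ Δ) (hΔ : G.maxDegree = Δ)
    (K : ℕ) (φ : Sym2 V → Option (Fin K)) (hφ : IsPartialProperEdgeColoring G φ)
    (F : Set (Sym2 V)) (hFE : ∀ e ∈ F, e ∈ G.edgeSet) (hFunc : ∀ e ∈ F, φ e = none)
    (hM : ∀ x : V, ∀ e₁ ∈ F, ∀ e₂ ∈ F, x ∈ e₁ → x ∈ e₂ → e₁ = e₂) :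
    ∀ e ∈ F, ((fanGraph G F).neighborSet e).ncard ≤ 2 * (Δ - 1) ^ 2 :=
  stmt_4_general G Δ hΔ F hFE hM
end

section
/- Let G be a finite simple graph with maximum degree Δ whose arboricity is at most a, i.e., for every vertex set U with |U| ≥ 2 the number of edges with both endpoints in U is at most a(|U| − 1). Let φ be a partial proper edge-coloring of G and F a subset of the uncolored edges that forms a matching in G. Then the fan-graph G^(F) has arboricity at most 16Δa: for every S ⊆ F with |S| ≥ 2, the number of pairs of distinct edges {e, e'} ⊆ S with dist_G(e, e') ≤ 2 is at most 16Δa(|S| − 1). -/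
open Finset

theorem exists_edist_le_of_edgeDist_le {V : Type*} (G : SimpleGraph V) {e₁ e₂ : Sym2 V} {n : ℕ}
    (h : edgeDist G e₁ e₂ ≤ n) : ∃ x ∈ e₁, ∃ y ∈ e₂, G.edist x y ≤ n := by
  have hlt : edgeDist G e₁ e₂ < n + 1 := ENat.lt_natCast_add_one_iff.2 h
  simp only [edgeDist, iInf_lt_iff] at hlt
  obtain ⟨x, hx, y, hy, hxy⟩ := hlt
  exact ⟨x, hx, y, hy, ENat.lt_natCast_add_one_iff.1 hxy⟩

theorem card_biUnion_toFinset_le {V : Type*} [DecidableEq V] (S : Finset (Sym2 V)) :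
    #(S.biUnion Sym2.toFinset) ≤ 2 * #S :=
  (card_biUnion_le_card_mul _ _ 2 fun e _ => by
    rw [Sym2.card_toFinset]; split_ifs <;> omega).trans_eq (mul_comm _ _)

theorem exists_forall_mem_apply_eq {V : Type*} (S : Finset (Sym2 V))
    (hS : ∀ x : V, ∀ e₁ ∈ S, ∀ e₂ ∈ S, x ∈ e₁ → x ∈ e₂ → e₁ = e₂) :
    ∃ σ : V → Sym2 V, ∀ e ∈ S, ∀ x ∈ e, σ x = e := by
  classical
  refine ⟨fun x => if h : ∃ e ∈ S, x ∈ e then h.choose else s(x, x), fun e he x hx => ?_⟩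
  have h : ∃ e ∈ S, x ∈ e := ⟨e, he, hx⟩
  simp only [dif_pos h]
  exact hS x _ h.choose_spec.1 e he h.choose_spec.2 hx

namespace SimpleGraph

variable {V : Type*} (G : SimpleGraph V)

theorem eq_or_adj_or_exists_adj_adj_of_edist_le_two {u v : V} (h : G.edist u v ≤ 2) :
    u = v ∨ G.Adj u v ∨ ∃ w, G.Adj u w ∧ G.Adj w v := by
  have := mt G.two_lt_edist_iff.mpr h.not_gt
  simp only [not_and, Set.eq_empty_iff_forall_notMem, mem_commonNeighbors, not_forall,
    not_not] at this
  grind [adj_comm]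

theorem one_le_maxDegree_of_mem_edgeSet [Fintype V] [DecidableRel G.Adj] {e : Sym2 V}
    (he : e ∈ G.edgeSet) : 1 ≤ G.maxDegree :=
  Nat.one_le_iff_ne_zero.2 fun h => by
    rw [maxDegree_eq_zero_iff] at h
    simp [h] at he

variable [Fintype V] [DecidableEq V] [DecidableRel G.Adj]

theorem sum_card_inter_neighborFinset (W : Finset V) :
    ∑ w ∈ W, #(W ∩ G.neighborFinset w) = 2 * #{e ∈ G.edgeFinset | ∀ x ∈ e, x ∈ W} := by
  set E := {e ∈ G.edgeFinset | ∀ x ∈ e, x ∈ W}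
  have hAbove : ∀ w ∈ W, #(W ∩ G.neighborFinset w) = #(E.bipartiteAbove (· ∈ ·) w) := by
    intro w hw
    have : E.bipartiteAbove (· ∈ ·) w = (W ∩ G.neighborFinset w).image (s(w, ·)) := by
      ext e
      induction e using Sym2.ind with
      | _ u v =>
        simp only [E, bipartiteAbove, mem_filter, mem_edgeFinset, mem_edgeSet, Sym2.mem_iff,
          forall_eq_or_imp, forall_eq, mem_image, mem_inter, mem_neighborFinset, Sym2.eq,
          Sym2.rel_iff', Prod.mk.injEq, Prod.swap_prod_mk]
        grind [adj_comm]
    rw [this, card_image_of_injective _ fun _ _ => Sym2.congr_right.1]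
  have hBelow : ∀ e ∈ E, #(W.bipartiteBelow (· ∈ ·) e) = 2 := by
    intro e he
    rw [mem_filter, mem_edgeFinset] at he
    have : W.bipartiteBelow (· ∈ ·) e = e.toFinset := by
      ext x
      simp only [bipartiteBelow, mem_filter, Sym2.mem_toFinset, and_iff_right_iff_imp]
      exact he.2 x
    rw [this, Sym2.card_toFinset_of_not_isDiag _ (G.not_isDiag_of_mem_edgeSet he.1)]
  rw [sum_congr rfl hAbove, sum_card_bipartiteAbove_eq_sum_card_bipartiteBelow,
    sum_congr rfl hBelow, sum_const, smul_eq_mul, mul_comm]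

def IsDegenerate (D : ℕ) : Prop :=
  ∀ W : Finset V, W.Nonempty → ∃ w ∈ W, #(W ∩ G.neighborFinset w) ≤ D

theorem isDegenerate_floor_two_mul {a : ℝ}
    (ha : ∀ U : Finset V, 2 ≤ #U → (#{e ∈ G.edgeFinset | ∀ x ∈ e, x ∈ U} : ℝ) ≤ a * (#U - 1)) :
    G.IsDegenerate ⌊2 * a⌋₊ := by
  intro W ⟨w, hw⟩
  by_contra! hlarge
  have hW : 2 ≤ #W := by
    obtain ⟨v, hv⟩ := card_pos.1 (Nat.zero_lt_of_lt (hlarge w hw))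
    rw [mem_inter, mem_neighborFinset] at hv
    exact one_lt_card.2 ⟨w, hw, v, hv.1, hv.2.ne⟩
  have hsum : #W * (⌊2 * a⌋₊ + 1) ≤ 2 * #{e ∈ G.edgeFinset | ∀ x ∈ e, x ∈ W} := by
    rw [← G.sum_card_inter_neighborFinset W, ← smul_eq_mul]
    exact card_nsmul_le_sum _ _ _ hlarge
  have hsumℝ : (#W : ℝ) * (⌊2 * a⌋₊ + 1) ≤ 2 * (a * (#W - 1)) := by
    have hcast : ((#W * (⌊2 * a⌋₊ + 1) : ℕ) : ℝ) ≤
        (2 * #{e ∈ G.edgeFinset | ∀ x ∈ e, x ∈ W} : ℕ) := by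
      exact_mod_cast hsum
    push_cast at hcast
    linarith [ha W hW]
  have hW1 : (1 : ℝ) ≤ #W - 1 := by
    have : (2 : ℝ) ≤ #W := by exact_mod_cast hW
    linarith
  nlinarith [Nat.lt_floor_add_one (2 * a)]

theorem IsDegenerate.exists_orientation {D : ℕ} (hG : G.IsDegenerate D) :
    ∃ out : V → Finset V, (∀ v, out v ⊆ G.neighborFinset v) ∧ (∀ v, #(out v) ≤ D) ∧
      ∀ u v, G.Adj u v → v ∈ out u ∨ u ∈ out v := by
  suffices ∀ W : Finset V, ∃ out : V → Finset V, (∀ v, out v ⊆ G.neighborFinset v) ∧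
      (∀ v, #(out v) ≤ D) ∧ ∀ u ∈ W, ∀ v ∈ W, G.Adj u v → v ∈ out u ∨ u ∈ out v by
    obtain ⟨out, hsub, hcard, hcover⟩ := this univ
    exact ⟨out, hsub, hcard, fun u v => hcover u (mem_univ u) v (mem_univ v)⟩
  intro W
  induction W using Finset.strongInduction with
  | H W ih =>
  obtain rfl | hW := W.eq_empty_or_nonempty
  · exact ⟨fun _ => ∅, fun _ => empty_subset _, fun _ => by simp, by simp⟩
  obtain ⟨w, hw, hwD⟩ := hG W hW
  obtain ⟨out, hsub, hcard, hcover⟩ := ih (W.erase w) (erase_ssubset hw)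
  refine ⟨Function.update out w (W ∩ G.neighborFinset w), fun v => ?_, fun v => ?_, ?_⟩
  · rcases eq_or_ne v w with rfl | hv
    · simp
    · simpa [hv] using hsub v
  · rcases eq_or_ne v w with rfl | hv
    · simp [hwD]
    · simpa [hv] using hcard v
  · intro u hu v hv huv
    simp only [Function.update_apply]
    split_ifs with hu' hv' hv'
    · exact absurd (hu'.trans hv'.symm) huv.ne
    · exact .inl (mem_inter.2 ⟨hv, (G.mem_neighborFinset _ _).2 (hu' ▸ huv)⟩)
    · exact .inr (mem_inter.2 ⟨hu, (G.mem_neighborFinset _ _).2 (hv' ▸ huv.symm)⟩)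
    · exact hcover u (mem_erase.2 ⟨hu', hu⟩) v (mem_erase.2 ⟨hv', hv⟩) huv

section FanGraph

variable (S : Finset (Sym2 V)) (σ : V → Sym2 V) (out : V → Finset V) (U : Finset V)

def fanGraphEdgeSet : Set (Sym2 (Sym2 V)) :=
  {p | ∃ e₁ e₂ : Sym2 V, p = s(e₁, e₂) ∧ e₁ ≠ e₂ ∧ e₁ ∈ S ∧ e₂ ∈ S ∧ edgeDist G e₁ e₂ ≤ 2}

/- A pair of edges of a matching at distance at most `2` is `s(σ x, σ y)` for an edge `xy`, or for
a path `x z y` that either leaves `x` (or `y`) along an out-edge, or whose both edges point out of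
`z`. -/
def adjPairs : Finset (Sym2 (Sym2 V)) :=
  {e ∈ G.edgeFinset | ∀ x ∈ e, x ∈ U}.image (Sym2.map σ)

def outPathPairs : Finset (Sym2 (Sym2 V)) :=
  U.biUnion fun x => (out x).biUnion fun z =>
    ((G.neighborFinset z).erase x).image fun y => s(σ x, σ y)

def inPathPairs : Finset (Sym2 (Sym2 V)) :=
  U.biUnion fun x => {z ∈ G.neighborFinset x | x ∈ out z}.biUnion fun z =>
    (out z).image fun y => s(σ x, σ y)

theorem fanGraphEdgeSet_subset (hσ : ∀ e ∈ S, ∀ x ∈ e, σ x = e)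
    (hU : ∀ e ∈ S, ∀ x ∈ e, x ∈ U) (hcover : ∀ u v, G.Adj u v → v ∈ out u ∨ u ∈ out v) :
    G.fanGraphEdgeSet S ⊆ ↑(G.adjPairs σ U ∪ G.outPathPairs σ out U ∪ G.inPathPairs σ out U) := by
  rintro _ ⟨e₁, e₂, rfl, hne, he₁, he₂, hd⟩
  obtain ⟨x, hx, y, hy, hxy⟩ := exists_edist_le_of_edgeDist_le G hd
  obtain rfl := hσ e₁ he₁ x hx
  obtain rfl := hσ e₂ he₂ y hy
  have hxU := hU _ he₁ x hx
  have hyU := hU _ he₂ y hy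
  simp only [adjPairs, outPathPairs, inPathPairs, coe_union, Set.mem_union, mem_coe, mem_image,
    mem_biUnion, mem_filter, mem_erase, mem_neighborFinset, mem_edgeFinset]
  rcases G.eq_or_adj_or_exists_adj_adj_of_edist_le_two hxy with rfl | hadj | ⟨z, hxz, hzy⟩
  · exact absurd rfl hne
  · exact .inl (.inl ⟨s(x, y), ⟨hadj, by simp [hxU, hyU]⟩, rfl⟩)
  · have hyx : y ≠ x := by rintro rfl; exact hne rfl
    rcases hcover x z hxz with hz | hxout
    · exact .inl (.inr ⟨x, hxU, z, hz, y, ⟨hyx, hzy⟩, rfl⟩)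
    rcases hcover y z hzy.symm with hz | hyout
    · exact .inl (.inr ⟨y, hyU, z, hz, x, ⟨hyx.symm, hxz.symm⟩, Sym2.eq_swap⟩)
    · exact .inr ⟨x, hxU, z, ⟨hxz, hxout⟩, y, hyout, rfl⟩

theorem card_outPathPairs_le {D : ℕ} (hsub : ∀ v, out v ⊆ G.neighborFinset v)
    (hcard : ∀ v, #(out v) ≤ D) :
    #(G.outPathPairs σ out U) ≤ #U * (D * (G.maxDegree - 1)) := by
  refine card_biUnion_le_card_mul _ _ _ fun x _ => ?_
  refine (card_biUnion_le_card_mul _ _ (G.maxDegree - 1) fun z hz => ?_).trans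
    (Nat.mul_le_mul_right _ (hcard x))
  have hxz : x ∈ G.neighborFinset z := by simpa [adj_comm] using hsub x hz
  calc #(((G.neighborFinset z).erase x).image fun y => s(σ x, σ y))
      ≤ #((G.neighborFinset z).erase x) := card_image_le
    _ = G.degree z - 1 := by rw [card_erase_of_mem hxz, card_neighborFinset_eq_degree]
    _ ≤ G.maxDegree - 1 := Nat.sub_le_sub_right (G.degree_le_maxDegree z) 1

theorem card_inPathPairs_le {D : ℕ} (hcard : ∀ v, #(out v) ≤ D) :
    #(G.inPathPairs σ out U) ≤ #U * (G.maxDegree * D) := by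
  refine card_biUnion_le_card_mul _ _ _ fun x _ => ?_
  refine (card_biUnion_le_card_mul _ _ D fun z _ => card_image_le.trans (hcard z)).trans
    (Nat.mul_le_mul_right _ ?_)
  exact (card_filter_le _ _).trans ((G.card_neighborFinset_eq_degree x).trans_le
    (G.degree_le_maxDegree x))

theorem ncard_fanGraphEdgeSet_le_card_add {D : ℕ} (hσ : ∀ e ∈ S, ∀ x ∈ e, σ x = e)
    (hU : ∀ e ∈ S, ∀ x ∈ e, x ∈ U) (hsub : ∀ v, out v ⊆ G.neighborFinset v)
    (hcard : ∀ v, #(out v) ≤ D) (hcover : ∀ u v, G.Adj u v → v ∈ out u ∨ u ∈ out v) :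
    (G.fanGraphEdgeSet S).ncard ≤ #{e ∈ G.edgeFinset | ∀ x ∈ e, x ∈ U} +
      #U * (D * (G.maxDegree - 1)) + #U * (G.maxDegree * D) :=
  calc (G.fanGraphEdgeSet S).ncard
      ≤ #(G.adjPairs σ U ∪ G.outPathPairs σ out U ∪ G.inPathPairs σ out U) := by
        rw [← Set.ncard_coe_finset]
        exact Set.ncard_le_ncard (G.fanGraphEdgeSet_subset S σ out U hσ hU hcover)
    _ ≤ #(G.adjPairs σ U) + #(G.outPathPairs σ out U) + #(G.inPathPairs σ out U) :=
        (card_union_le _ _).trans (Nat.add_le_add_right (card_union_le _ _) _)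
    _ ≤ _ := Nat.add_le_add (Nat.add_le_add card_image_le
        (G.card_outPathPairs_le σ out U hsub hcard)) (G.card_inPathPairs_le σ out U hcard)

theorem ncard_fanGraphEdgeSet_le {a : ℝ}
    (ha : ∀ U : Finset V, 2 ≤ #U → (#{e ∈ G.edgeFinset | ∀ x ∈ e, x ∈ U} : ℝ) ≤ a * (#U - 1))
    (hSE : ∀ e ∈ S, e ∈ G.edgeSet) (hS2 : 2 ≤ #S) (hσ : ∀ e ∈ S, ∀ x ∈ e, σ x = e)
    (hsub : ∀ v, out v ⊆ G.neighborFinset v) (hcard : ∀ v, #(out v) ≤ ⌊2 * a⌋₊)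
    (hcover : ∀ u v, G.Adj u v → v ∈ out u ∨ u ∈ out v) :
    ((G.fanGraphEdgeSet S).ncard : ℝ) ≤ 16 * G.maxDegree * a * (#S - 1) := by
  set U := S.biUnion Sym2.toFinset
  have hU : ∀ e ∈ S, ∀ x ∈ e, x ∈ U := fun e he x hx =>
    mem_biUnion.2 ⟨e, he, Sym2.mem_toFinset.2 hx⟩
  obtain ⟨e, he⟩ := card_pos.1 (by omega : 0 < #S)
  have hU2 : 2 ≤ #U :=
    Sym2.card_toFinset_of_not_isDiag e (G.not_isDiag_of_mem_edgeSet (hSE e he)) ▸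
      card_le_card (subset_biUnion_of_mem _ he)
  have hΔ := G.one_le_maxDegree_of_mem_edgeSet (hSE e he)
  have hEU := ha U hU2
  have hUS : (#U : ℝ) ≤ 2 * #S := by exact_mod_cast card_biUnion_toFinset_le S
  have hU2' : (2 : ℝ) ≤ #U := by exact_mod_cast hU2
  have hS2' : (2 : ℝ) ≤ #S := by exact_mod_cast hS2
  have hΔ' : (1 : ℝ) ≤ G.maxDegree := by exact_mod_cast hΔ
  have ha0 : 0 ≤ a := by
    have : (0 : ℝ) ≤ a * (#U - 1) := (Nat.cast_nonneg _).trans hEU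
    nlinarith
  have hD : (⌊2 * a⌋₊ : ℝ) ≤ 2 * a := Nat.floor_le (by positivity)
  have hcount := G.ncard_fanGraphEdgeSet_le_card_add S σ out U hσ hU hsub hcard hcover
  rw [← Nat.cast_le (α := ℝ)] at hcount
  push_cast [Nat.cast_sub hΔ] at hcount
  calc ((G.fanGraphEdgeSet S).ncard : ℝ)
      ≤ #{e ∈ G.edgeFinset | ∀ x ∈ e, x ∈ U} + #U * ⌊2 * a⌋₊ * (2 * G.maxDegree - 1) := by
        linarith
    _ ≤ a * (2 * #S - 1) + 2 * #S * (2 * a) * (2 * G.maxDegree - 1) := by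
        refine add_le_add (hEU.trans (by gcongr)) ?_
        gcongr
        linarith
    _ ≤ 16 * G.maxDegree * a * (#S - 1) := by
        nlinarith [mul_nonneg ha0 (mul_nonneg (by linarith : (0 : ℝ) ≤ G.maxDegree)
          (by linarith : (0 : ℝ) ≤ #S - 2))]

end FanGraph

end SimpleGraph

theorem stmt_6_general {V : Type*} [Fintype V] [DecidableEq V] (G : SimpleGraph V)
    [DecidableRel G.Adj] (Δ : ℕ) (hΔ : G.maxDegree = Δ) (a : ℝ)
    (ha : ∀ U : Finset V, 2 ≤ U.card →
      ((G.edgeFinset.filter (fun e => ∀ x ∈ e, x ∈ U)).card : ℝ) ≤ a * ((U.card : ℝ) - 1))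
    (F : Finset (Sym2 V)) (hFE : ∀ e ∈ F, e ∈ G.edgeSet)
    (hM : ∀ x : V, ∀ e₁ ∈ F, ∀ e₂ ∈ F, x ∈ e₁ → x ∈ e₂ → e₁ = e₂) :
    ∀ S : Finset (Sym2 V), S ⊆ F → 2 ≤ S.card →
      (({p : Sym2 (Sym2 V) | ∃ e₁ e₂ : Sym2 V, p = s(e₁, e₂) ∧ e₁ ≠ e₂ ∧
          e₁ ∈ S ∧ e₂ ∈ S ∧ edgeDist G e₁ e₂ ≤ 2}).ncard : ℝ)
        ≤ 16 * Δ * a * ((S.card : ℝ) - 1) := by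
  intro S hSF hS2
  obtain ⟨out, hsub, hcard, hcover⟩ := (G.isDegenerate_floor_two_mul ha).exists_orientation
  obtain ⟨σ, hσ⟩ := exists_forall_mem_apply_eq S fun x e₁ h₁ e₂ h₂ => hM x e₁ (hSF h₁) e₂ (hSF h₂)
  exact hΔ ▸ G.ncard_fanGraphEdgeSet_le S σ out ha (fun e he => hFE e (hSF he)) hS2 hσ hsub hcard
    hcover

/-- Let `G` have maximum degree `Δ` and arboricity at most `a` (every
vertex set `U` with `|U| ≥ 2` spans at most `a(|U|-1)` edges), let `φ` be a partial
proper edge-coloring and `F` a matching of uncolored edges. Then the fan-graph `G^(F)`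
has arboricity at most `16Δa`: for every `S ⊆ F` with `|S| ≥ 2`, the number of
unordered pairs of distinct edges of `S` at edge-distance at most `2` is at most
`16Δa(|S| - 1)`. -/
theorem stmt_6 {V : Type*} [Fintype V] [DecidableEq V] (G : SimpleGraph V)
    [DecidableRel G.Adj] (Δ : ℕ) (hΔ : G.maxDegree = Δ) (a : ℝ)
    (ha : ∀ U : Finset V, 2 ≤ U.card →
      ((G.edgeFinset.filter (fun e => ∀ x ∈ e, x ∈ U)).card : ℝ) ≤ a * ((U.card : ℝ) - 1))
    (K : ℕ) (φ : Sym2 V → Option (Fin K)) (hφ : IsPartialProperEdgeColoring G φ)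
    (F : Finset (Sym2 V)) (hFE : ∀ e ∈ F, e ∈ G.edgeSet) (hFunc : ∀ e ∈ F, φ e = none)
    (hM : ∀ x : V, ∀ e₁ ∈ F, ∀ e₂ ∈ F, x ∈ e₁ → x ∈ e₂ → e₁ = e₂) :
    ∀ S : Finset (Sym2 V), S ⊆ F → 2 ≤ S.card →
      (({p : Sym2 (Sym2 V) | ∃ e₁ e₂ : Sym2 V, p = s(e₁, e₂) ∧ e₁ ≠ e₂ ∧
          e₁ ∈ S ∧ e₂ ∈ S ∧ edgeDist G e₁ e₂ ≤ 2}).ncard : ℝ)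
        ≤ 16 * Δ * a * ((S.card : ℝ) - 1) :=
  stmt_6_general G Δ hΔ a ha F hFE hM
end

section
/- Let G be a finite simple graph with maximum degree Δ, let φ be a partial proper edge-coloring of G with colors {1, …, Δ+1}, and let ⟨u_1, …, u_k⟩ be a fan of a vertex v with designated missing colors m(v) and ⟨m(u_1), …, m(u_k)⟩. Define φ' (the rotation of the fan) by setting φ'(v, u_i) = φ(v, u_{i+1}) for 1 ≤ i ≤ k−1, uncoloring the edge (v, u_k), and keeping every other edge as in φ. Then φ' is a partial proper edge-coloring of G with colors {1, …, Δ+1}, and its domain equals (dom(φ) ∪ {(v, u_1)}) \ {(v, u_k)}. -/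
structure IsFanRotation {V : Type*} {K : ℕ} (φ φ' : Sym2 V → Option (Fin K)) (v : V) {k : ℕ}
    (u : Fin (k + 1) → V) : Prop where
  shift : ∀ i : Fin k, φ' s(v, u i.castSucc) = φ s(v, u i.succ)
  last : φ' s(v, u (Fin.last k)) = none
  of_not_fan : ∀ e : Sym2 V, (∀ i, e ≠ s(v, u i)) → φ' e = φ e

section

variable {V : Type*} {G : SimpleGraph V} {K : ℕ} {φ φ' : Sym2 V → Option (Fin K)} {v : V}
  {k : ℕ} {u : Fin (k + 1) → V} {mv : Fin K} {m : Fin (k + 1) → Fin K}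

namespace IsFan

theorem edge_inj (hfan : IsFan G φ v u mv m) {i j : Fin (k + 1)} :
    s(v, u i) = s(v, u j) ↔ i = j :=
  ⟨fun h => hfan.inj (Sym2.congr_right.mp h), fun h => h ▸ rfl⟩

theorem isSome_of_ne_zero (hfan : IsFan G φ v u mv m) {i : Fin (k + 1)} (hi : i ≠ 0) :
    (φ s(v, u i)).isSome := by
  obtain ⟨j, rfl⟩ := Fin.exists_succ_eq.mpr hi
  simp [hfan.colored j]

theorem injective_missing_castSucc (hfan : IsFan G φ v u mv m)
    (hφ : IsPartialProperEdgeColoring G φ) :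
    Function.Injective fun i : Fin k => m i.castSucc := by
  intro i j hij
  by_contra hne
  have hedge : s(v, u i.succ) ≠ s(v, u j.succ) := by
    rw [Ne, hfan.edge_inj, Fin.succ_inj]
    exact hne
  exact hφ.2 _ _ hedge ⟨v, Sym2.mem_mk_left _ _, Sym2.mem_mk_left _ _⟩ _
    ((hfan.colored i).trans (congrArg some hij)) (hfan.colored j)

/-- At `v` the color `m i` sits on the fan edge `(v, u (i+1))`, and at `u i` it is missing. -/
theorem apply_ne_missing_of_not_fan (hfan : IsFan G φ v u mv m)
    (hφ : IsPartialProperEdgeColoring G φ) (i : Fin k) {e : Sym2 V}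
    (he : ∀ j, e ≠ s(v, u j)) {x : V} (hx : x ∈ s(v, u i.castSucc)) (hxe : x ∈ e) :
    φ e ≠ some (m i.castSucc) := by
  intro hc
  rcases Sym2.mem_iff.mp hx with rfl | rfl
  · exact hφ.2 e _ (he i.succ) ⟨x, hxe, Sym2.mem_mk_left _ _⟩ _ hc (hfan.colored i)
  · exact hfan.missing i.castSucc e hxe hc

end IsFan

namespace IsFanRotation

theorem apply_castSucc (hrot : IsFanRotation φ φ' v u) (hfan : IsFan G φ v u mv m)
    (i : Fin k) : φ' s(v, u i.castSucc) = some (m i.castSucc) :=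
  (hrot.shift i).trans (hfan.colored i)

theorem exists_of_apply_eq_some (hrot : IsFanRotation φ φ' v u) (hfan : IsFan G φ v u mv m)
    {i : Fin (k + 1)} {c : Fin K} (hc : φ' s(v, u i) = some c) :
    ∃ j : Fin k, i = j.castSucc ∧ c = m j.castSucc := by
  have hi : i ≠ Fin.last k := by
    rintro rfl
    simp [hrot.last] at hc
  obtain ⟨j, rfl⟩ := Fin.exists_castSucc_eq.mpr hi
  rw [hrot.apply_castSucc hfan, Option.some_inj] at hc
  exact ⟨j, rfl, hc.symm⟩

theorem apply_ne_of_fan (hrot : IsFanRotation φ φ' v u) (hfan : IsFan G φ v u mv m)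
    (hφ : IsPartialProperEdgeColoring G φ) {i : Fin (k + 1)} {e : Sym2 V}
    (hne : s(v, u i) ≠ e) (hshare : ∃ x, x ∈ s(v, u i) ∧ x ∈ e) {c : Fin K}
    (hc : φ' s(v, u i) = some c) : φ' e ≠ some c := by
  obtain ⟨i, rfl, rfl⟩ := hrot.exists_of_apply_eq_some hfan hc
  by_cases hfe : ∃ j, e = s(v, u j)
  · obtain ⟨j, rfl⟩ := hfe
    intro hc'
    obtain ⟨j, rfl, hm⟩ := hrot.exists_of_apply_eq_some hfan hc'
    rw [hfan.injective_missing_castSucc hφ hm] at hne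
    exact hne rfl
  · push Not at hfe
    obtain ⟨x, hx, hxe⟩ := hshare
    rw [hrot.of_not_fan e hfe]
    exact hfan.apply_ne_missing_of_not_fan hφ i hfe hx hxe

theorem isPartialProperEdgeColoring (hrot : IsFanRotation φ φ' v u)
    (hfan : IsFan G φ v u mv m) (hφ : IsPartialProperEdgeColoring G φ) :
    IsPartialProperEdgeColoring G φ' := by
  refine ⟨fun e he => ?_, fun e₁ e₂ hne hshare c hc₁ hc₂ => ?_⟩
  · by_cases hfe : ∃ i, e = s(v, u i)
    · obtain ⟨i, rfl⟩ := hfe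
      exact hfan.adj i
    · push Not at hfe
      exact hφ.1 e (hrot.of_not_fan e hfe ▸ he)
  by_cases hf₁ : ∃ i, e₁ = s(v, u i)
  · obtain ⟨i, rfl⟩ := hf₁
    exact hrot.apply_ne_of_fan hfan hφ hne hshare hc₁ hc₂
  by_cases hf₂ : ∃ j, e₂ = s(v, u j)
  · obtain ⟨j, rfl⟩ := hf₂
    obtain ⟨x, hx₁, hx₂⟩ := hshare
    exact hrot.apply_ne_of_fan hfan hφ hne.symm ⟨x, hx₂, hx₁⟩ hc₂ hc₁
  push Not at hf₁ hf₂
  rw [hrot.of_not_fan e₁ hf₁] at hc₁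
  rw [hrot.of_not_fan e₂ hf₂] at hc₂
  exact hφ.2 e₁ e₂ hne hshare c hc₁ hc₂

theorem isSome_iff (hrot : IsFanRotation φ φ' v u) (hfan : IsFan G φ v u mv m)
    (e : Sym2 V) :
    (φ' e).isSome ↔ (((φ e).isSome ∨ e = s(v, u 0)) ∧ e ≠ s(v, u (Fin.last k))) := by
  by_cases hfe : ∃ i, e = s(v, u i)
  · obtain ⟨i, rfl⟩ := hfe
    rcases Fin.eq_castSucc_or_eq_last i with ⟨i, rfl⟩ | rfl
    · have hi0 : (φ s(v, u i.castSucc)).isSome ∨ i.castSucc = 0 :=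
        (em (i.castSucc = 0)).symm.imp hfan.isSome_of_ne_zero id
      simpa [hrot.apply_castSucc hfan, hfan.edge_inj, Fin.castSucc_ne_last] using hi0
    · simp [hrot.last]
  · push Not at hfe
    simp [hrot.of_not_fan e hfe, hfe 0, hfe (Fin.last k)]

end IsFanRotation

end

theorem stmt_8_general {V : Type*} (G : SimpleGraph V) (Δ : ℕ)
    (φ : Sym2 V → Option (Fin (Δ + 1))) (hφ : IsPartialProperEdgeColoring G φ)
    (v : V) {k : ℕ} (u : Fin (k + 1) → V) (mv : Fin (Δ + 1)) (m : Fin (k + 1) → Fin (Δ + 1))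
    (hfan : IsFan G φ v u mv m)
    (φ' : Sym2 V → Option (Fin (Δ + 1)))
    (h1 : ∀ i : Fin k, φ' s(v, u i.castSucc) = φ s(v, u i.succ))
    (h2 : φ' s(v, u (Fin.last k)) = none)
    (h3 : ∀ e : Sym2 V, (∀ i, e ≠ s(v, u i)) → φ' e = φ e) :
    IsPartialProperEdgeColoring G φ' ∧
    ∀ e : Sym2 V,
      (φ' e).isSome ↔ (((φ e).isSome ∨ e = s(v, u 0)) ∧ e ≠ s(v, u (Fin.last k))) := by
  have hrot : IsFanRotation φ φ' v u := ⟨h1, h2, h3⟩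
  exact ⟨hrot.isPartialProperEdgeColoring hfan hφ, hrot.isSome_iff hfan⟩

/-- Rotating a fan: if `⟨u 0, …, u k⟩` is a fan of `v` for a partial
proper `(Δ+1)`-edge-coloring `φ` and `φ'` is obtained from `φ` by giving each edge
`(v, u i)` (`i < k`) the color of `(v, u (i+1))`, uncoloring `(v, u k)`, and keeping all
other edges unchanged, then `φ'` is again a partial proper `(Δ+1)`-edge-coloring, and
its domain equals `(dom φ ∪ {(v, u 0)}) \ {(v, u k)}`. -/
theorem stmt_8 {V : Type*} [Fintype V] [DecidableEq V] (G : SimpleGraph V)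
    [DecidableRel G.Adj] (Δ : ℕ) (hΔ : G.maxDegree = Δ)
    (φ : Sym2 V → Option (Fin (Δ + 1))) (hφ : IsPartialProperEdgeColoring G φ)
    (v : V) {k : ℕ} (u : Fin (k + 1) → V) (mv : Fin (Δ + 1)) (m : Fin (k + 1) → Fin (Δ + 1))
    (hfan : IsFan G φ v u mv m)
    (φ' : Sym2 V → Option (Fin (Δ + 1)))
    (h1 : ∀ i : Fin k, φ' s(v, u i.castSucc) = φ s(v, u i.succ))
    (h2 : φ' s(v, u (Fin.last k)) = none)
    (h3 : ∀ e : Sym2 V, (∀ i, e ≠ s(v, u i)) → φ' e = φ e) :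
    IsPartialProperEdgeColoring G φ' ∧
    ∀ e : Sym2 V,
      (φ' e).isSome ↔ (((φ e).isSome ∨ e = s(v, u 0)) ∧ e ≠ s(v, u (Fin.last k))) :=
  stmt_8_general G Δ φ hφ v u mv m hfan φ' h1 h2 h3
end

section
/- Let G be a finite simple graph with maximum degree Δ, let φ be a partial proper edge-coloring of G using colors {1, …, Δ+1}, and let e be an edge of G not in the domain of φ. Then there exists a partial proper edge-coloring φ' of G using colors {1, …, Δ+1} whose domain is exactly dom(φ) ∪ {e}. (In particular, a proper (Δ+1)-edge-coloring can be updated upon insertion of a new edge, as long as the maximum degree bound is preserved.) -/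
/-!
Vizing's recoloring argument. Every vertex has degree at most `Δ`, so it misses one of the
`Δ + 1` colors. Let `e = uv` and grow a maximal fan `v = v₀, v₁, …, vₖ` at `u`, in which the color
of `u vᵢ₊₁` is missing at `vᵢ`. Rotating a fan (moving the color of `u vᵢ₊₁` to `u vᵢ`) and
coloring its last edge with a color missing both at `u` and at its last vertex extends `φ` to `e`.
Let `α` be missing at `u` and `β` at `vₖ`. If `β` is also missing at `u`, rotate the whole fan.
Otherwise, by maximality, `β` sits on an edge `u vⱼ` of the fan, so `β` is missing at `vⱼ₋₁`.
Since `u` misses `α`, the `α`/`β` Kempe chain of `u` is a path starting at `u` and contains at most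
one vertex missing `β`. So it avoids the chain of `vₖ` or that of `vⱼ₋₁`; swapping `α` and `β`
on that chain makes `α` missing at its fan vertex without disturbing `u` or the fan up to that
vertex, which can then be rotated.
-/

section

open Function Relation List

theorem MulAction.zpow_smul_eq_of_zpow_one_sub_smul_eq {G α : Type*} [Group G] [MulAction G α]
    {f : G} {u : α} {a b : ℤ} (ha : f ^ (1 - a) • u = f ^ a • u)
    (hb : f ^ (1 - b) • u = f ^ b • u) : f ^ a • u = f ^ b • u := by
  have hdvd {n : ℤ} (h : f ^ (1 - n) • u = f ^ n • u) : (period f u : ℤ) ∣ 1 - 2 * n := by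
    rw [← zpow_smul_eq_iff_period_dvd, show 1 - 2 * n = -n + (1 - n) by ring, zpow_add,
      mul_smul, h, ← mul_smul, ← zpow_add, neg_add_cancel, zpow_zero, one_smul]
  -- the period divides the odd number `1 - 2a`, hence is coprime to `2`
  have hcop : IsCoprime (period f u : ℤ) 2 := by
    obtain ⟨k, hk⟩ := hdvd ha
    exact ⟨k, a, by linear_combination -hk⟩
  have hab : (period f u : ℤ) ∣ b - a :=
    hcop.dvd_of_dvd_mul_left (by convert dvd_sub (hdvd ha) (hdvd hb) using 1; ring)
  rw [← zpow_smul_eq_iff_period_dvd] at hab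
  calc f ^ a • u = f ^ a • f ^ (b - a) • u := by rw [hab]
    _ = f ^ b • u := by rw [← mul_smul, ← zpow_add, add_sub_cancel]

theorem Function.Involutive.eq_of_reflTransGen {α : Type*} {σ τ : α → α}
    (hσ : Involutive σ) (hτ : Involutive τ) {u x y : α} (hu : σ u = u) (hx : τ x = x)
    (hy : τ y = y) (hux : ReflTransGen (fun a b => b = σ a ∨ b = τ a) u x)
    (huy : ReflTransGen (fun a b => b = σ a ∨ b = τ a) u y) : x = y := by
  let s := hσ.toPerm σ
  let t := hτ.toPerm τ
  have hs : s * s = 1 := Equiv.ext hσ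
  have ht : t * t = 1 := Equiv.ext hτ
  let f := t * s
  -- `s` and `t` both invert `f`, so they act on the orbit `f ^ n • u` as the reflections
  -- `n ↦ -n` and `n ↦ 1 - n`
  have hsf : SemiconjBy s f f⁻¹ := by
    rw [SemiconjBy, mul_inv_rev, inv_eq_of_mul_eq_one_left hs, inv_eq_of_mul_eq_one_left ht,
      mul_assoc]
  have htf : SemiconjBy t f f⁻¹ := by
    rw [SemiconjBy, mul_inv_rev, inv_eq_of_mul_eq_one_left hs, inv_eq_of_mul_eq_one_left ht,
      ← mul_assoc, ht, one_mul, mul_assoc, ht, mul_one]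
  have hσn (n : ℤ) : σ ((f ^ n) u) = (f ^ (-n)) u := by
    simpa [inv_zpow', s, hu] using congrArg (· u) (hsf.zpow_right n).eq
  have hτn (n : ℤ) : τ ((f ^ n) u) = (f ^ (1 - n)) u := by
    have := congrArg (· u) (htf.zpow_right n).eq
    simp only [Equiv.Perm.mul_apply, inv_zpow'] at this
    rw [sub_eq_neg_add, zpow_add, zpow_one, Equiv.Perm.mul_apply]
    exact this.trans (congrArg _ (congrArg τ hu.symm))
  have horbit (z : α) (h : ReflTransGen (fun a b => b = σ a ∨ b = τ a) u z) :
      ∃ n : ℤ, (f ^ n) • u = z := by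
    induction h with
    | refl => exact ⟨0, rfl⟩
    | tail _ hzw ih =>
      obtain ⟨n, rfl⟩ := ih
      rcases hzw with rfl | rfl
      · exact ⟨-n, (hσn n).symm⟩
      · exact ⟨1 - n, (hτn n).symm⟩
  obtain ⟨a, rfl⟩ := horbit x hux
  obtain ⟨b, rfl⟩ := horbit y huy
  exact MulAction.zpow_smul_eq_of_zpow_one_sub_smul_eq ((hτn a).symm.trans hx)
    ((hτn b).symm.trans hy)

variable {V : Type*} {G : SimpleGraph V} {K : ℕ}

def IsFreeAt (φ : Sym2 V → Option (Fin K)) (c : Fin K) (z : V) : Prop :=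
  ∀ t, φ s(z, t) ≠ some c

def ExtendsToEdge (G : SimpleGraph V) (φ : Sym2 V → Option (Fin K)) (e : Sym2 V) : Prop :=
  ∃ φ' : Sym2 V → Option (Fin K), IsPartialProperEdgeColoring G φ' ∧
    ∀ f, (φ' f).isSome ↔ ((φ f).isSome ∨ f = e)

theorem ExtendsToEdge.of_isSome_iff {φ ψ : Sym2 V → Option (Fin K)} {e e' : Sym2 V}
    (h : ExtendsToEdge G ψ e') (hψ : ∀ f, (ψ f).isSome ∨ f = e' ↔ (φ f).isSome ∨ f = e) :
    ExtendsToEdge G φ e :=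
  let ⟨φ', hφ', hdom⟩ := h
  ⟨φ', hφ', fun f => (hdom f).trans (hψ f)⟩

theorem isPartialProperEdgeColoring_iff {φ : Sym2 V → Option (Fin K)} :
    IsPartialProperEdgeColoring G φ ↔ (∀ f, (φ f).isSome → f ∈ G.edgeSet) ∧
      ∀ z t t' c, φ s(z, t) = some c → φ s(z, t') = some c → t = t' := by
  refine and_congr_right fun _ => ⟨fun h z t t' c ht ht' => ?_, fun h e₁ e₂ hne ⟨z, h₁, h₂⟩ c => ?_⟩
  · by_contra hne
    exact h _ _ (mt Sym2.congr_right.mp hne) ⟨z, Sym2.mem_mk_left z t, Sym2.mem_mk_left z t'⟩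
      c ht ht'
  · obtain ⟨t, rfl⟩ := Sym2.mem_iff_exists.mp h₁
    obtain ⟨t', rfl⟩ := Sym2.mem_iff_exists.mp h₂
    exact fun ht ht' => hne (congrArg _ (h z t t' c ht ht'))

namespace IsPartialProperEdgeColoring

variable {φ : Sym2 V → Option (Fin K)}

theorem adj_of_eq_some (hφ : IsPartialProperEdgeColoring G φ) {z t : V} {c : Fin K}
    (h : φ s(z, t) = some c) : G.Adj z t :=
  hφ.1 _ (by rw [h]; rfl)

theorem eq_of_eq_some (hφ : IsPartialProperEdgeColoring G φ) {z t t' : V} {c : Fin K}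
    (h : φ s(z, t) = some c) (h' : φ s(z, t') = some c) : t = t' :=
  (isPartialProperEdgeColoring_iff.mp hφ).2 z t t' c h h'

theorem mono (hφ : IsPartialProperEdgeColoring G φ) {ψ : Sym2 V → Option (Fin K)}
    (h : ∀ f c, ψ f = some c → φ f = some c) : IsPartialProperEdgeColoring G ψ := by
  refine ⟨fun f hf => hφ.1 f ?_,
    fun e₁ e₂ hne hx c h₁ h₂ => hφ.2 e₁ e₂ hne hx c (h _ _ h₁) (h _ _ h₂)⟩
  obtain ⟨c, hc⟩ := Option.isSome_iff_exists.mp hf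
  simp [h f c hc]

theorem exists_isFreeAt (hφ : IsPartialProperEdgeColoring G φ)
    {z : V} [Fintype (G.neighborSet z)] (hz : G.degree z < K) : ∃ c, IsFreeAt φ c z := by
  by_contra! h
  simp only [IsFreeAt, not_forall, not_not] at h
  choose nbr hnbr using h
  have hinj : Injective fun c => (⟨nbr c, hφ.adj_of_eq_some (hnbr c)⟩ : G.neighborSet z) :=
    fun c c' hcc' => Option.some_injective _ <| (hnbr c).symm.trans <| by
      rw [show nbr c = nbr c' from congrArg Subtype.val hcc', hnbr c']
  have := Fintype.card_le_of_injective _ hinj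
  rw [Fintype.card_fin, G.card_neighborSet_eq_degree] at this
  omega

variable [DecidableEq V]

theorem update_none (hφ : IsPartialProperEdgeColoring G φ) (e : Sym2 V) :
    IsPartialProperEdgeColoring G (update φ e none) :=
  hφ.mono fun f c h => by
    rcases eq_or_ne f e with rfl | hne
    · simp at h
    · rwa [update_of_ne hne] at h

theorem update_some (hφ : IsPartialProperEdgeColoring G φ) {a b : V} {c : Fin K}
    (hab : G.Adj a b) (ha : IsFreeAt φ c a) (hb : IsFreeAt φ c b) :
    IsPartialProperEdgeColoring G (update φ s(a, b) (some c)) := by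
  have hfree {z t : V} (h : s(z, t) = s(a, b)) : IsFreeAt φ c z := by
    rcases Sym2.mem_iff.mp (h ▸ Sym2.mem_mk_left z t) with rfl | rfl <;> assumption
  refine isPartialProperEdgeColoring_iff.mpr ⟨fun f hf => ?_, fun z t t' d h h' => ?_⟩
  · rcases eq_or_ne f s(a, b) with rfl | hne
    · exact hab
    · exact hφ.1 f (by rwa [update_of_ne hne] at hf)
  · by_cases h₁ : s(z, t) = s(a, b) <;> by_cases h₂ : s(z, t') = s(a, b)
    · exact Sym2.congr_right.mp (h₁.trans h₂.symm)
    · rw [h₁, update_self] at h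
      rw [update_of_ne h₂, ← h] at h'
      exact absurd h' (hfree h₁ t')
    · rw [h₂, update_self] at h'
      rw [update_of_ne h₁, ← h'] at h
      exact absurd h (hfree h₂ t)
    · rw [update_of_ne h₁] at h
      rw [update_of_ne h₂] at h'
      exact hφ.eq_of_eq_some h h'

end IsPartialProperEdgeColoring

namespace IsFreeAt

variable [DecidableEq V] {φ : Sym2 V → Option (Fin K)} {c : Fin K} {z : V}

theorem update (h : IsFreeAt φ c z) {e : Sym2 V} {x : Option (Fin K)} (hx : x ≠ some c) :
    IsFreeAt (update φ e x) c z := fun t => by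
  rcases eq_or_ne s(z, t) e with rfl | hne
  · rwa [update_self]
  · rw [update_of_ne hne]; exact h t

theorem update_of_not_mem (h : IsFreeAt φ c z) {e : Sym2 V} {x : Option (Fin K)} (hz : z ∉ e) :
    IsFreeAt (Function.update φ e x) c z := fun t => by
  rw [update_of_ne (ne_of_mem_of_not_mem' (Sym2.mem_mk_left z t) hz)]
  exact h t

end IsFreeAt

theorem IsPartialProperEdgeColoring.isFreeAt_update_none [DecidableEq V]
    {φ : Sym2 V → Option (Fin K)} (hφ : IsPartialProperEdgeColoring G φ) {z b : V} {c : Fin K}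
    (h : φ s(z, b) = some c) : IsFreeAt (update φ s(z, b) none) c z := fun t => by
  rcases eq_or_ne t b with rfl | hne
  · simp
  · rw [update_of_ne (mt Sym2.congr_right.mp hne)]
    exact fun ht => hne (hφ.eq_of_eq_some ht h)

section Kempe

variable {φ : Sym2 V → Option (Fin K)} {α β : Fin K}

def KempeAdj (φ : Sym2 V → Option (Fin K)) (α β : Fin K) (z t : V) : Prop :=
  φ s(z, t) = some α ∨ φ s(z, t) = some β

instance : Std.Symm (KempeAdj φ α β) :=
  ⟨fun z t h => by rwa [KempeAdj, Sym2.eq_swap]⟩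

def kempeComponent (φ : Sym2 V → Option (Fin K)) (α β : Fin K) (x : V) : Set V :=
  {z | ReflTransGen (KempeAdj φ α β) x z}

def IsKempeClosed (φ : Sym2 V → Option (Fin K)) (α β : Fin K) (S : Set V) : Prop :=
  ∀ z t, z ∈ S → KempeAdj φ α β z t → t ∈ S

theorem isKempeClosed_kempeComponent (φ : Sym2 V → Option (Fin K)) (α β : Fin K) (x : V) :
    IsKempeClosed φ α β (kempeComponent φ α β x) :=
  fun _ _ hz h => ReflTransGen.tail hz h

open Classical in
noncomputable def kempeSwap (φ : Sym2 V → Option (Fin K)) (S : Set V) (α β : Fin K)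
    (f : Sym2 V) : Option (Fin K) :=
  if f ∈ S.sym2 then (φ f).map (Equiv.swap α β) else φ f

variable {S : Set V}

theorem isSome_kempeSwap (f : Sym2 V) : (kempeSwap φ S α β f).isSome = (φ f).isSome := by
  unfold kempeSwap
  split_ifs <;> simp

theorem kempeSwap_apply_of_not_mem {z : V} (hz : z ∉ S) (t : V) :
    kempeSwap φ S α β s(z, t) = φ s(z, t) := by
  simp [kempeSwap, Set.mk_mem_sym2_iff, hz]

theorem kempeSwap_apply_of_mem (hS : IsKempeClosed φ α β S) {z : V}
    (hz : z ∈ S) (t : V) : kempeSwap φ S α β s(z, t) = (φ s(z, t)).map (Equiv.swap α β) := by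
  by_cases ht : t ∈ S
  · simp [kempeSwap, Set.mk_mem_sym2_iff, hz, ht]
  rw [kempeSwap, if_neg (by simp [Set.mk_mem_sym2_iff, ht])]
  -- an edge leaving `S` carries neither `α` nor `β`, so the swap does not affect it
  cases hd : φ s(z, t) with
  | none => rfl
  | some d =>
    have hdα : d ≠ α := fun h => ht (hS z t hz (Or.inl (h ▸ hd)))
    have hdβ : d ≠ β := fun h => ht (hS z t hz (Or.inr (h ▸ hd)))
    simp [Equiv.swap_apply_of_ne_of_ne hdα hdβ]

theorem isPartialProperEdgeColoring_kempeSwap (hφ : IsPartialProperEdgeColoring G φ)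
    (hS : IsKempeClosed φ α β S) :
    IsPartialProperEdgeColoring G (kempeSwap φ S α β) := by
  refine isPartialProperEdgeColoring_iff.mpr
    ⟨fun f hf => hφ.1 f (by rwa [isSome_kempeSwap] at hf), fun z t t' c h h' => ?_⟩
  by_cases hz : z ∈ S
  · rw [kempeSwap_apply_of_mem hS hz] at h h'
    obtain ⟨d, hd, -⟩ := Option.map_eq_some_iff.mp h
    have heq := Option.map_injective (Equiv.injective _) (h.trans h'.symm)
    exact hφ.eq_of_eq_some hd (heq ▸ hd)
  · rw [kempeSwap_apply_of_not_mem hz] at h h'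
    exact hφ.eq_of_eq_some h h'

theorem IsFreeAt.kempeSwap_of_not_mem {c : Fin K} {z : V} (h : IsFreeAt φ c z) (hz : z ∉ S) :
    IsFreeAt (kempeSwap φ S α β) c z := fun t => by
  rw [kempeSwap_apply_of_not_mem hz]
  exact h t

theorem IsFreeAt.kempeSwap_of_mem (hS : IsKempeClosed φ α β S) {c : Fin K}
    {z : V} (h : IsFreeAt φ c z) (hz : z ∈ S) :
    IsFreeAt (kempeSwap φ S α β) (Equiv.swap α β c) z := fun t ht => by
  rw [kempeSwap_apply_of_mem hS hz] at ht
  obtain ⟨d, hd, hdc⟩ := Option.map_eq_some_iff.mp ht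
  exact h t (Equiv.injective _ hdc ▸ hd)

open Classical in
noncomputable def partner (φ : Sym2 V → Option (Fin K)) (c : Fin K) (z : V) : V :=
  if h : ∃ t, φ s(z, t) = some c then h.choose else z

theorem IsPartialProperEdgeColoring.partner_eq (hφ : IsPartialProperEdgeColoring G φ)
    {c : Fin K} {z t : V} (h : φ s(z, t) = some c) : partner φ c z = t := by
  have hex : ∃ t, φ s(z, t) = some c := ⟨t, h⟩
  rw [partner, dif_pos hex]
  exact hφ.eq_of_eq_some hex.choose_spec h

theorem partner_eq_self {c : Fin K} {z : V} (h : IsFreeAt φ c z) : partner φ c z = z := by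
  rw [partner, dif_neg]
  exact fun ⟨t, ht⟩ => h t ht

theorem IsPartialProperEdgeColoring.involutive_partner (hφ : IsPartialProperEdgeColoring G φ)
    (c : Fin K) : Involutive (partner φ c) := fun z => by
  by_cases h : ∃ t, φ s(z, t) = some c
  · obtain ⟨t, ht⟩ := h
    rw [hφ.partner_eq ht, hφ.partner_eq (by rwa [Sym2.eq_swap])]
  · rw [partner_eq_self fun t ht => h ⟨t, ht⟩, partner_eq_self fun t ht => h ⟨t, ht⟩]

theorem IsPartialProperEdgeColoring.eq_of_reflTransGen_kempeAdj
    (hφ : IsPartialProperEdgeColoring G φ) {u x y : V} (hu : IsFreeAt φ α u)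
    (hx : IsFreeAt φ β x) (hy : IsFreeAt φ β y) (hux : ReflTransGen (KempeAdj φ α β) u x)
    (huy : ReflTransGen (KempeAdj φ α β) u y) : x = y := by
  have hmono : KempeAdj φ α β ≤ fun a b => b = partner φ α a ∨ b = partner φ β a :=
    fun _ _ h => h.imp (fun h => (hφ.partner_eq h).symm) (fun h => (hφ.partner_eq h).symm)
  exact (hφ.involutive_partner α).eq_of_reflTransGen (hφ.involutive_partner β)
    (partner_eq_self hu) (partner_eq_self hx) (partner_eq_self hy) (ReflTransGen.mono hmono _ _ hux)
    (ReflTransGen.mono hmono _ _ huy)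

end Kempe

theorem List.exists_nodup_isChain_maximal {α : Type*} [Fintype α] (R : α → α → Prop) (v : α) :
    ∃ r : List α, (v :: r).Nodup ∧ (v :: r).IsChain R ∧
      ∀ w ∉ v :: r, ¬ R ((v :: r).getLast (cons_ne_nil v r)) w := by
  by_contra! hext
  have hlong (n : ℕ) : ∃ r : List α, r.length = n ∧ (v :: r).Nodup ∧ (v :: r).IsChain R := by
    induction n with
    | zero => exact ⟨[], rfl, nodup_singleton v, .singleton v⟩
    | succ n ih =>
      obtain ⟨r, hlen, hnd, hc⟩ := ih
      obtain ⟨w, hw, hR⟩ := hext r hnd hc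
      refine ⟨r ++ [w], by simp [hlen], ?_, ?_⟩
      · rw [← cons_append]
        exact hnd.append (nodup_singleton w) (disjoint_singleton.mpr hw)
      · rw [← cons_append]
        exact hc.append (.singleton w) (by simpa [getLast?_eq_some_getLast] using hR)
  obtain ⟨r, hlen, hnd, -⟩ := hlong (Fintype.card α)
  simpa [hlen] using hnd.length_le_card

section Fan

variable {φ : Sym2 V → Option (Fin K)} {u : V}

def IsFanLink (φ : Sym2 V → Option (Fin K)) (u p q : V) : Prop :=
  ∃ d, φ s(u, q) = some d ∧ IsFreeAt φ d p

theorem IsPartialProperEdgeColoring.adj_of_mem_fan (hφ : IsPartialProperEdgeColoring G φ) :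
    ∀ {v : V} {r : List V}, (v :: r).IsChain (IsFanLink φ u) → ∀ q ∈ r, G.Adj u q
  | _, [], _ => by simp
  | _, b :: t, h => by
    obtain ⟨⟨d, hd, -⟩, h'⟩ := isChain_cons_cons.mp h
    intro q hq
    rcases mem_cons.mp hq with rfl | hq
    · exact hφ.adj_of_eq_some hd
    · exact hφ.adj_of_mem_fan h' q hq

variable [DecidableEq V]

theorem IsPartialProperEdgeColoring.extendsToEdge_of_fan {c : Fin K} :
    ∀ {φ : Sym2 V → Option (Fin K)} {v : V} (r : List V), IsPartialProperEdgeColoring G φ →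
      G.Adj u v → φ s(u, v) = none → (v :: r).Nodup → (v :: r).IsChain (IsFanLink φ u) →
      IsFreeAt φ c u → IsFreeAt φ c ((v :: r).getLast (cons_ne_nil v r)) →
      ExtendsToEdge G φ s(u, v)
  | φ, v, [], hφ, huv, _, _, _, hu, hv => by
    refine ⟨_, hφ.update_some huv hu hv, fun f => ?_⟩
    rcases eq_or_ne f s(u, v) with rfl | hne <;> simp [*]
  | φ, v, b :: t, hφ, huv, hunc, hnd, hfan, hu, hlast => by
    obtain ⟨⟨d, hd, hdv⟩, hfan'⟩ := isChain_cons_cons.mp hfan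
    have hub : G.Adj u b := hφ.adj_of_eq_some hd
    have hvbt : v ∉ b :: t := (nodup_cons.mp hnd).1
    have hbt : b ∉ t := (nodup_cons.mp (nodup_cons.mp hnd).2).1
    have hne : s(u, v) ≠ s(u, b) := mt Sym2.congr_right.mp fun h => hvbt (h ▸ mem_cons_self)
    set φ₁ := update (update φ s(u, b) none) s(u, v) (some d)
    have hφ₁ : IsPartialProperEdgeColoring G φ₁ :=
      (hφ.update_none _).update_some huv (hφ.isFreeAt_update_none hd) (hdv.update (by simp))
    have hoff {z : V} (hz : z ∈ b :: t) : z ∉ s(u, v) := by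
      have hzu : z ≠ u := (hφ.adj_of_mem_fan hfan z hz).ne'
      simp only [Sym2.mem_iff, not_or]
      exact ⟨hzu, fun h => hvbt (h ▸ hz)⟩
    have hfree {z : V} {c' : Fin K} (hz : z ∈ b :: t) (h : IsFreeAt φ c' z) : IsFreeAt φ₁ c' z :=
      (h.update (by simp)).update_of_not_mem (hoff hz)
    have hfan₁ : (b :: t).IsChain (IsFanLink φ₁ u) := by
      refine hfan'.imp_of_mem_tail_imp fun p q hp hq ⟨d', hq', hp'⟩ => ⟨d', ?_, hfree hp hp'⟩
      have hqv : s(u, q) ≠ s(u, v) :=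
        mt Sym2.congr_right.mp fun h => hvbt (h ▸ mem_cons_of_mem _ hq)
      have hqb : s(u, q) ≠ s(u, b) := mt Sym2.congr_right.mp fun h => hbt (h ▸ hq)
      rwa [show φ₁ s(u, q) = φ s(u, q) by simp [φ₁, hqv, hqb]]
    have hcd : some d ≠ some c := fun h => hu b (h ▸ hd)
    have ih := extendsToEdge_of_fan t hφ₁ hub (by simp [φ₁, update_of_ne hne.symm])
      (nodup_cons.mp hnd).2 hfan₁ ((hu.update (by simp)).update hcd)
      (hfree (getLast_mem _) (by rwa [getLast_cons] at hlast))
    refine ih.of_isSome_iff fun f => ?_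
    by_cases hfv : f = s(u, v)
    · simp [hfv, φ₁]
    by_cases hfb : f = s(u, b)
    · simp [hfb, φ₁, hne.symm, hd]
    · simp [φ₁, hfv, hfb]

end Fan

section KempeFan

variable {φ : Sym2 V → Option (Fin K)} {S : Set V} {α β : Fin K} {u : V}

theorem IsFanLink.kempeSwap (hS : IsKempeClosed φ α β S) (hu : u ∉ S)
    (hα : IsFreeAt φ α u) {p q : V} (h : IsFanLink φ u p q) (hβ : φ s(u, q) ≠ some β ∨ p ∉ S) :
    IsFanLink (kempeSwap φ S α β) u p q := by
  obtain ⟨d, hd, hp⟩ := h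
  refine ⟨d, by rw [kempeSwap_apply_of_not_mem hu, hd], ?_⟩
  by_cases hpS : p ∈ S
  · have hdα : d ≠ α := fun h => hα q (h ▸ hd)
    have hdβ : d ≠ β := fun h => hβ.resolve_right (not_not.mpr hpS) (h ▸ hd)
    simpa [Equiv.swap_apply_of_ne_of_ne hdα hdβ] using hp.kempeSwap_of_mem hS hpS
  · exact hp.kempeSwap_of_not_mem hpS

theorem List.IsChain.kempeSwap_isFanLink (hS : IsKempeClosed φ α β S)
    (hu : u ∉ S) (hα : IsFreeAt φ α u) {l : List V} (hl : l.IsChain (IsFanLink φ u))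
    (hβ : ∀ q ∈ l.tail, φ s(u, q) ≠ some β) : l.IsChain (IsFanLink (kempeSwap φ S α β) u) :=
  hl.imp_of_mem_tail_imp fun _ q _ hq h => h.kempeSwap hS hu hα (Or.inl (hβ q hq))

theorem IsPartialProperEdgeColoring.extendsToEdge_of_kempeSwap [DecidableEq V]
    (hφ : IsPartialProperEdgeColoring G φ) (hS : IsKempeClosed φ α β S)
    (hu : u ∉ S) (hα : IsFreeAt φ α u) {v : V} {r : List V} (huv : G.Adj u v)
    (hunc : φ s(u, v) = none) (hnd : (v :: r).Nodup)
    (hfan : (v :: r).IsChain (IsFanLink (kempeSwap φ S α β) u))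
    (hlast : (v :: r).getLast (cons_ne_nil v r) ∈ S)
    (hβ : IsFreeAt φ β ((v :: r).getLast (cons_ne_nil v r))) : ExtendsToEdge G φ s(u, v) := by
  have h := (isPartialProperEdgeColoring_kempeSwap hφ hS).extendsToEdge_of_fan r huv
    (by rw [kempeSwap_apply_of_not_mem hu, hunc]) hnd hfan (hα.kempeSwap_of_not_mem hu)
    (by simpa using hβ.kempeSwap_of_mem hS hlast)
  exact h.of_isSome_iff fun f => by rw [isSome_kempeSwap]

end KempeFan

theorem IsPartialProperEdgeColoring.extendsToEdge_of_split_fan [DecidableEq V]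
    {φ : Sym2 V → Option (Fin K)} (hφ : IsPartialProperEdgeColoring G φ) {α β : Fin K}
    {u v w : V} {r₁ r₂ : List V} (huv : G.Adj u v) (hunc : φ s(u, v) = none)
    (hnd : (v :: r₁ ++ w :: r₂).Nodup) (hfan : (v :: r₁ ++ w :: r₂).IsChain (IsFanLink φ u))
    (hα : IsFreeAt φ α u) (hw : φ s(u, w) = some β)
    (hβ : IsFreeAt φ β ((w :: r₂).getLast (cons_ne_nil w r₂))) : ExtendsToEdge G φ s(u, v) := by
  set x := (w :: r₂).getLast (cons_ne_nil w r₂)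
  set y := (v :: r₁).getLast (cons_ne_nil v r₁)
  obtain ⟨hfan₁, hfan₂, hlink⟩ := isChain_append.mp hfan
  have hyw : IsFanLink φ u y w := hlink y (getLast?_eq_some_getLast _) w rfl
  have hβy : IsFreeAt φ β y := by
    obtain ⟨d, hd, hy⟩ := hyw
    rwa [Option.some_injective _ (hd.symm.trans hw)] at hy
  obtain ⟨hnd₁, hnd₂, hdisj⟩ := nodup_append.mp hnd
  have hβ₁ : ∀ q ∈ (v :: r₁).tail, φ s(u, q) ≠ some β := fun q hq h =>
    hdisj _ (mem_cons_of_mem v (hφ.eq_of_eq_some h hw ▸ hq)) _ mem_cons_self rfl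
  have hβ₂ : ∀ q ∈ (w :: r₂).tail, φ s(u, q) ≠ some β := fun q hq h =>
    (nodup_cons.mp hnd₂).1 (hφ.eq_of_eq_some h hw ▸ hq)
  have hlast : (v :: r₁ ++ w :: r₂).getLast (by simp) = x :=
    getLast_append_of_ne_nil _ (cons_ne_nil w r₂)
  by_cases hyu : ReflTransGen (KempeAdj φ α β) y u
  · -- `u` lies on the Kempe chain ending at `y`, so not on the one ending at `x`: swap the latter
    -- and rotate the whole fan
    have hxy : x ≠ y := (hdisj y (getLast_mem _) x (getLast_mem _)).symm
    have hux : u ∉ kempeComponent φ α β x := fun hxu =>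
      hxy (hφ.eq_of_reflTransGen_kempeAdj hα hβ hβy (symm hxu) (symm hyu))
    have hyS : y ∉ kempeComponent φ α β x := fun h => hux (h.trans hyu)
    have hS := isKempeClosed_kempeComponent φ α β x
    refine hφ.extendsToEdge_of_kempeSwap hS hux hα huv hunc hnd ?_ (hlast ▸ ReflTransGen.refl) (hlast ▸ hβ)
    refine (hfan₁.kempeSwap_isFanLink hS hux hα hβ₁).append
      (hfan₂.kempeSwap_isFanLink hS hux hα hβ₂) fun a ha b hb => ?_
    obtain rfl : a = y := by simpa [getLast?_eq_some_getLast] using ha.symm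
    obtain rfl : b = w := by simpa using hb.symm
    exact hyw.kempeSwap hS hux hα (Or.inr hyS)
  · -- swap the Kempe chain ending at `y` and rotate the fan up to `y`
    have hS := isKempeClosed_kempeComponent φ α β y
    exact hφ.extendsToEdge_of_kempeSwap hS hyu hα huv hunc
      hnd₁ (hfan₁.kempeSwap_isFanLink hS hyu hα hβ₁) ReflTransGen.refl hβy

theorem IsPartialProperEdgeColoring.extendsToEdge_of_degree_lt [Fintype V] [DecidableEq V]
    [DecidableRel G.Adj] {φ : Sym2 V → Option (Fin K)} (hφ : IsPartialProperEdgeColoring G φ)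
    (hdeg : ∀ z, G.degree z < K) {u v : V} (huv : G.Adj u v) (hunc : φ s(u, v) = none) :
    ExtendsToEdge G φ s(u, v) := by
  obtain ⟨r, hnd, hfan, hmax⟩ := exists_nodup_isChain_maximal (IsFanLink φ u) v
  obtain ⟨α, hα⟩ := hφ.exists_isFreeAt (hdeg u)
  obtain ⟨β, hβ⟩ := hφ.exists_isFreeAt (hdeg ((v :: r).getLast (cons_ne_nil v r)))
  by_cases hβu : IsFreeAt φ β u
  · exact hφ.extendsToEdge_of_fan r huv hunc hnd hfan hβu hβ
  obtain ⟨w, hw⟩ : ∃ w, φ s(u, w) = some β := by simpa [IsFreeAt] using hβu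
  -- by maximality of the fan, the `β`-edge at `u` leads back into the fan
  have hwr : w ∈ r := by
    have hwf : w ∈ v :: r := by_contra fun h => hmax w h ⟨β, hw, hβ⟩
    exact (mem_cons.mp hwf).resolve_left (by rintro rfl; simp [hunc] at hw)
  obtain ⟨r₁, r₂, rfl⟩ := append_of_mem hwr
  rw [← cons_append] at hnd hfan
  exact hφ.extendsToEdge_of_split_fan huv hunc hnd hfan hα hw (by simpa using hβ)

end

/-- Edge-coloring update: if `G` has maximum degree `Δ`, `φ` is a
partial proper edge-coloring of `G` with colors `{1, …, Δ+1}` and `e` is an uncolored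
edge of `G`, then there is a partial proper edge-coloring `φ'` with the same palette
whose domain is exactly `dom φ ∪ {e}`. -/
theorem stmt_9 {V : Type*} [Fintype V] [DecidableEq V] (G : SimpleGraph V)
    [DecidableRel G.Adj] (Δ : ℕ) (hΔ : G.maxDegree = Δ)
    (φ : Sym2 V → Option (Fin (Δ + 1))) (hφ : IsPartialProperEdgeColoring G φ)
    (e : Sym2 V) (he : e ∈ G.edgeSet) (hunc : φ e = none) :
    ∃ φ' : Sym2 V → Option (Fin (Δ + 1)), IsPartialProperEdgeColoring G φ' ∧
      ∀ f : Sym2 V, (φ' f).isSome ↔ ((φ f).isSome ∨ f = e) := by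
  induction e using Sym2.ind with
  | h u v =>
    have hdeg (z : V) : G.degree z < Δ + 1 := Nat.lt_succ_of_le (hΔ ▸ G.degree_le_maxDegree z)
    exact hφ.extendsToEdge_of_degree_lt hdeg he hunc
end

section
/- Every finite simple graph with maximum degree Δ admits a proper (Δ+1)-edge-coloring, i.e., a map φ : E → {1, …, Δ+1} such that any two distinct edges sharing an endpoint receive different colors (Vizing's theorem). -/
/-!
Vizing's argument in the form of Misra and Gries: a proper partial coloring with `Δ + 1` colors
is extended one edge at a time. To color an uncolored edge `x y`, let `α` be missing at `x` and
take a maximal fan `y = y₀, …, yₙ` of neighbours of `x` in which the color of `x yᵢ₊₁` is missing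
at `yᵢ`; let `β` be missing at `yₙ`. If `β` is also missing at `x`, rotating the fan (`x yᵢ` takes
the color of `x yᵢ₊₁`) uncolors `x yₙ`, which then takes `β`. Otherwise `β` sits on an edge
`x yⱼ₊₁`, and exchanging `α` and `β` on the Kempe chain through `x` frees `β` at `x`, while either
the whole fan or its prefix `y₀, …, yⱼ` remains a fan whose last vertex misses `β`: Kempe chains
are paths, so the chain through `x` cannot end at both `yⱼ` and `yₙ`.
-/

open Function

namespace SimpleGraph

variable {V C : Type*}

section Walks

variable {K : SimpleGraph V}

lemma Walk.IsPath.not_subsingleton_neighborSet {a b v : V} {p : K.Walk a b} (hp : p.IsPath)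
    (hv : v ∈ p.support) (ha : v ≠ a) (hb : v ≠ b) : ¬(K.neighborSet v).Subsingleton := by
  obtain ⟨i, rfl, hi⟩ := Walk.mem_support_iff_exists_getVert.mp hv
  have h0 : i ≠ 0 := by rintro rfl; exact ha p.getVert_zero
  have hlt : i < p.length := lt_of_le_of_ne hi (by rintro rfl; exact hb p.getVert_length)
  intro hs
  have hnbr := hp.neighborSet_toSubgraph_internal h0 hlt
  have heq : p.getVert (i - 1) = p.getVert (i + 1) :=
    hs (p.toSubgraph.neighborSet_subset _ (by rw [hnbr]; simp))
      (p.toSubgraph.neighborSet_subset _ (by rw [hnbr]; simp))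
  have := hp.getVert_injOn (by simp; omega) (by simp; omega) heq
  omega

variable (hK : ∀ ⦃v a b d : V⦄, K.Adj v a → K.Adj v b → K.Adj v d → a = b ∨ a = d ∨ b = d)
include hK

lemma Walk.IsPath.end_mem_support_or {x t : V} {p : K.Walk x t} (hp : p.IsPath) :
    ∀ {u : V} {q : K.Walk x u}, q.IsPath →
      (∀ ⦃a b⦄, K.Adj x a → K.Adj x b → a ∈ p.support → b ∈ q.support → a = b) →
      t ∈ q.support ∨ u ∈ p.support := by
  induction p with
  | nil => intro _ q _ _; exact Or.inl q.start_mem_support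
  | @cons x a t h p ih =>
    intro u q hq hx
    cases q with
    | nil => exact Or.inr (Walk.start_mem_support _)
    | @cons _ b _ h' q =>
      obtain rfl : a = b := hx h h' (by simp) (by simp)
      rw [Walk.cons_isPath_iff] at hp hq
      refine (ih hp.1 hq.1 fun c d hc hd hcp hdq => ?_).imp (by simp_all) (by simp_all)
      rcases hK h.symm hc hd with rfl | rfl | h
      · exact absurd hcp hp.2
      · exact absurd hdq hq.2
      · exact h

theorem not_reachable_of_subsingleton_neighborSet {x t u : V}
    (hx : (K.neighborSet x).Subsingleton) (ht : (K.neighborSet t).Subsingleton)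
    (hu : (K.neighborSet u).Subsingleton) (hxt : x ≠ t) (hxu : x ≠ u) (htu : t ≠ u)
    (hreach : K.Reachable x t) : ¬K.Reachable x u := by
  classical
  rintro ⟨q⟩
  obtain ⟨p⟩ := hreach
  rcases (p.bypass_isPath).end_mem_support_or hK q.bypass_isPath
      (fun a b ha hb _ _ => hx ha hb) with h | h
  · exact q.bypass_isPath.not_subsingleton_neighborSet h hxt.symm htu ht
  · exact p.bypass_isPath.not_subsingleton_neighborSet h hxu.symm htu.symm hu

end Walks

variable (G : SimpleGraph V)

-- `c e = none` means that the edge `e` is not yet colored.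
def IsPartialEdgeColoring (c : Sym2 V → Option C) : Prop :=
  ∀ ⦃u v w : V⦄ ⦃γ : C⦄, G.Adj u v → G.Adj u w → c s(u, v) = some γ → c s(u, w) = some γ → v = w

def IsMissingAt (c : Sym2 V → Option C) (γ : C) (v : V) : Prop :=
  ∀ ⦃w : V⦄, G.Adj v w → c s(v, w) ≠ some γ

variable {G} {c : Sym2 V → Option C} {α β γ δ : C} {u v w x : V}

lemma isPartialEdgeColoring_none : G.IsPartialEdgeColoring fun _ => (none : Option C) :=
  fun _ _ _ _ _ _ h => by cases h

lemma exists_isMissingAt [Fintype C] [G.LocallyFinite] (c : Sym2 V → Option C)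
    (hv : G.degree v < Fintype.card C) : ∃ γ, G.IsMissingAt c γ v := by
  classical
  obtain ⟨_, hγ, hnot⟩ := Finset.exists_mem_notMem_of_card_lt_card
    (s := (G.neighborFinset v).image fun w => c s(v, w)) (t := Finset.univ.image some) <| by
      rw [Finset.card_image_of_injective _ (Option.some_injective C)]
      exact Finset.card_image_le.trans_lt hv
  obtain ⟨γ, -, rfl⟩ := Finset.mem_image.mp hγ
  exact ⟨γ, fun w hw h => hnot (Finset.mem_image.mpr ⟨w, (G.mem_neighborFinset v w).mpr hw, h⟩)⟩

section Update

variable [DecidableEq V]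

lemma IsMissingAt.update_none (h : G.IsMissingAt c γ v) (e : Sym2 V) :
    G.IsMissingAt (update c e none) γ v := by
  intro w hw
  rw [update_apply]
  split_ifs
  · simp
  · exact h hw

lemma IsMissingAt.update_some (h : G.IsMissingAt c γ v) (e : Sym2 V) (hδ : δ ≠ γ) :
    G.IsMissingAt (update c e (some δ)) γ v := by
  intro w hw
  rw [update_apply]
  split_ifs
  · simpa using hδ
  · exact h hw

lemma IsMissingAt.update_of_notMem (h : G.IsMissingAt c γ v) {e : Sym2 V} (hv : v ∉ e)
    (o : Option C) : G.IsMissingAt (update c e o) γ v := by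
  intro w hw
  rw [update_of_ne (by rintro rfl; exact hv (Sym2.mem_mk_left v w))]
  exact h hw

lemma IsPartialEdgeColoring.isMissingAt_update_none (hc : G.IsPartialEdgeColoring c)
    (hw : G.Adj v w) (h : c s(v, w) = some γ) : G.IsMissingAt (update c s(v, w) none) γ v := by
  intro w' hw' h'
  obtain rfl | hne := eq_or_ne w' w
  · simp at h'
  · rw [update_of_ne (mt Sym2.congr_right.mp hne)] at h'
    exact hne (hc hw' hw h' h)

lemma IsPartialEdgeColoring.update_none (hc : G.IsPartialEdgeColoring c) (e : Sym2 V) :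
    G.IsPartialEdgeColoring (update c e none) := by
  intro u v w γ hv hw h₁ h₂
  rw [update_apply] at h₁ h₂
  split_ifs at h₁ h₂
  exact hc hv hw h₁ h₂

lemma IsPartialEdgeColoring.update_some (hc : G.IsPartialEdgeColoring c)
    (hu : G.IsMissingAt c γ u) (hv : G.IsMissingAt c γ v) :
    G.IsPartialEdgeColoring (update c s(u, v) (some γ)) := by
  have hmiss : ∀ {a b}, s(a, b) = s(u, v) → G.IsMissingAt c γ a := fun h => by
    rcases Sym2.mem_iff.mp (h ▸ Sym2.mem_mk_left _ _) with rfl | rfl <;> assumption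
  intro a b d δ hb hd h₁ h₂
  rw [update_apply] at h₁ h₂
  split_ifs at h₁ h₂ with e₁ e₂ e₂
  · exact Sym2.congr_right.mp (e₁.trans e₂.symm)
  · cases h₁; exact absurd h₂ (hmiss e₁ hd)
  · cases h₂; exact absurd h₁ (hmiss e₂ hb)
  · exact hc hb hd h₁ h₂

end Update

section Kempe

variable (G) in
def kempeGraph (c : Sym2 V → Option C) (α β : C) : SimpleGraph V where
  Adj u v := G.Adj u v ∧ (c s(u, v) = some α ∨ c s(u, v) = some β)
  symm := ⟨fun u v h => ⟨h.1.symm, by rw [Sym2.eq_swap]; exact h.2⟩⟩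
  loopless := ⟨fun v h => G.loopless.irrefl v h.1⟩

lemma IsPartialEdgeColoring.kempeGraph_adj_eq (hc : G.IsPartialEdgeColoring c) ⦃v a b d : V⦄
    (ha : (G.kempeGraph c α β).Adj v a) (hb : (G.kempeGraph c α β).Adj v b)
    (hd : (G.kempeGraph c α β).Adj v d) : a = b ∨ a = d ∨ b = d := by
  obtain ⟨ha, h₁ | h₁⟩ := ha <;> obtain ⟨hb, h₂ | h₂⟩ := hb <;> obtain ⟨hd, h₃ | h₃⟩ := hd <;>
    first
    | exact Or.inl (hc ha hb h₁ h₂)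
    | exact Or.inr (Or.inl (hc ha hd h₁ h₃))
    | exact Or.inr (Or.inr (hc hb hd h₂ h₃))

lemma IsPartialEdgeColoring.subsingleton_neighborSet_kempeGraph (hc : G.IsPartialEdgeColoring c)
    (hv : G.IsMissingAt c α v ∨ G.IsMissingAt c β v) :
    ((G.kempeGraph c α β).neighborSet v).Subsingleton := by
  rintro a ⟨ha, h₁ | h₁⟩ b ⟨hb, h₂ | h₂⟩ <;> rcases hv with hv | hv <;>
    first
    | exact hc ha hb h₁ h₂
    | exact absurd h₁ (hv ha)
    | exact absurd h₂ (hv hb)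

variable [DecidableEq C]

variable (G) in
open Classical in
noncomputable def kempeSwap (c : Sym2 V → Option C) (α β : C) (x : V) : Sym2 V → Option C :=
  fun e => if ∃ v ∈ e, (G.kempeGraph c α β).Reachable x v then (c e).map (Equiv.swap α β) else c e

lemma kempeSwap_of_reachable (hu : (G.kempeGraph c α β).Reachable x u) (v : V) :
    G.kempeSwap c α β x s(u, v) = (c s(u, v)).map (Equiv.swap α β) :=
  if_pos ⟨u, Sym2.mem_mk_left u v, hu⟩

lemma kempeSwap_of_not_reachable (hu : ¬(G.kempeGraph c α β).Reachable x u) (huv : G.Adj u v) :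
    G.kempeSwap c α β x s(u, v) = c s(u, v) := by
  by_cases hv : (G.kempeGraph c α β).Reachable x v
  · have hαβ : c s(u, v) ≠ some α ∧ c s(u, v) ≠ some β := by
      constructor <;> intro h <;>
        exact hu (hv.trans (Adj.reachable ⟨huv.symm, by rw [Sym2.eq_swap]; simp [h]⟩))
    rw [Sym2.eq_swap, kempeSwap_of_reachable hv, Sym2.eq_swap]
    cases h : c s(u, v) with
    | none => rfl
    | some γ =>
      rw [h] at hαβ
      simp only [Option.map_some, Option.some.injEq]
      exact Equiv.swap_apply_of_ne_of_ne (by simpa using hαβ.1) (by simpa using hαβ.2)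
  · refine if_neg ?_
    rintro ⟨w, hw, hreach⟩
    rcases Sym2.mem_iff.mp hw with rfl | rfl
    · exact hu hreach
    · exact hv hreach

lemma kempeSwap_eq_none_iff {e : Sym2 V} : G.kempeSwap c α β x e = none ↔ c e = none := by
  unfold kempeSwap
  split_ifs <;> simp

lemma IsPartialEdgeColoring.kempeSwap (hc : G.IsPartialEdgeColoring c) :
    G.IsPartialEdgeColoring (G.kempeSwap c α β x) := by
  intro u v w γ hv hw h₁ h₂
  by_cases hu : (G.kempeGraph c α β).Reachable x u
  · rw [kempeSwap_of_reachable hu] at h₁ h₂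
    obtain ⟨γ₁, e₁, rfl⟩ := Option.map_eq_some_iff.mp h₁
    obtain ⟨γ₂, e₂, h⟩ := Option.map_eq_some_iff.mp h₂
    exact hc hv hw e₁ ((Equiv.injective _ h) ▸ e₂)
  · rw [kempeSwap_of_not_reachable hu hv] at h₁
    rw [kempeSwap_of_not_reachable hu hw] at h₂
    exact hc hv hw h₁ h₂

lemma IsMissingAt.kempeSwap_of_reachable (h : G.IsMissingAt c γ u)
    (hu : (G.kempeGraph c α β).Reachable x u) :
    G.IsMissingAt (G.kempeSwap c α β x) (Equiv.swap α β γ) u := by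
  intro w hw h'
  rw [_root_.SimpleGraph.kempeSwap_of_reachable hu] at h'
  obtain ⟨γ', e, he⟩ := Option.map_eq_some_iff.mp h'
  exact h hw (Equiv.injective _ he ▸ e)

lemma IsMissingAt.kempeSwap_of_not_reachable (h : G.IsMissingAt c γ u)
    (hu : ¬(G.kempeGraph c α β).Reachable x u) : G.IsMissingAt (G.kempeSwap c α β x) γ u := by
  intro w hw
  rw [_root_.SimpleGraph.kempeSwap_of_not_reachable hu hw]
  exact h hw

end Kempe

section Fan

variable (G) in
structure IsFan (c : Sym2 V → Option C) (x : V) (ys : ℕ → V) (n : ℕ) : Prop where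
  injOn : Set.InjOn ys (Set.Iic n)
  adj : ∀ i ≤ n, G.Adj x (ys i)
  first : c s(x, ys 0) = none
  step : ∀ i < n, ∃ γ, c s(x, ys (i + 1)) = some γ ∧ G.IsMissingAt c γ (ys i)

variable {ys : ℕ → V} {n : ℕ}

lemma IsFan.apply_ne (h : G.IsFan c x ys n) {i j : ℕ} (hi : i ≤ n) (hj : j ≤ n) (hij : i ≠ j) :
    ys i ≠ ys j :=
  fun e => hij (h.injOn (Set.mem_Iic.mpr hi) (Set.mem_Iic.mpr hj) e)

lemma IsFan.mono (h : G.IsFan c x ys n) {m : ℕ} (hm : m ≤ n) : G.IsFan c x ys m where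
  injOn := h.injOn.mono (Set.Iic_subset_Iic.mpr hm)
  adj i hi := h.adj i (hi.trans hm)
  first := h.first
  step i hi := h.step i (by omega)

lemma IsFan.lt_degree [G.LocallyFinite] (h : G.IsFan c x ys n) : n < G.degree x := by
  have := Finset.card_le_card_of_injOn ys (s := Finset.range (n + 1)) (t := G.neighborFinset x)
    (fun i hi => by simpa using h.adj i (by simpa [Nat.lt_succ_iff] using hi))
    (h.injOn.mono fun i hi => by simpa [Nat.lt_succ_iff] using hi)
  simpa using this

lemma IsFan.snoc (h : G.IsFan c x ys n) {z : V} (hz : G.Adj x z) (hnew : ∀ i ≤ n, ys i ≠ z)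
    (hβ : c s(x, z) = some β) (hβy : G.IsMissingAt c β (ys n)) :
    G.IsFan c x (update ys (n + 1) z) (n + 1) where
  injOn i hi j hj hij := by
    rw [Set.mem_Iic] at hi hj
    simp only [update_apply] at hij
    split_ifs at hij with h₁ h₂ h₂
    · omega
    · exact absurd hij.symm (hnew j (by omega))
    · exact absurd hij (hnew i (by omega))
    · exact h.injOn (Set.mem_Iic.mpr (by omega)) (Set.mem_Iic.mpr (by omega)) hij
  adj i hi := by
    rw [update_apply]
    split_ifs
    · exact hz
    · exact h.adj i (by omega)
  first := by rw [update_of_ne (by omega)]; exact h.first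
  step i hi := by
    rw [update_of_ne (by omega : i ≠ n + 1), update_apply]
    split_ifs with hi'
    · obtain rfl : i = n := by omega
      exact ⟨β, hβ, hβy⟩
    · exact h.step i (by omega)

lemma exists_isFan_closed [G.LocallyFinite] {y : V} (hxy : G.Adj x y) (h0 : c s(x, y) = none) :
    ∃ ys n, G.IsFan c x ys n ∧ ys 0 = y ∧
      ∀ z β, G.Adj x z → c s(x, z) = some β → G.IsMissingAt c β (ys n) → ∃ i ≤ n, ys i = z := by
  classical
  let P : ℕ → Prop := fun m => ∃ ys, G.IsFan c x ys m ∧ ys 0 = y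
  have hP0 : P 0 := ⟨fun _ => y,
    ⟨fun i hi j hj _ => by simp_all, fun _ _ => hxy, h0, fun i hi => absurd hi i.not_lt_zero⟩, rfl⟩
  obtain ⟨ys, hfan, hy⟩ := Nat.findGreatest_spec (P := P) (n := G.degree x) (Nat.zero_le _) hP0
  refine ⟨ys, _, hfan, hy, fun z β hz hβ hβy => ?_⟩
  by_contra! hnew
  have hsnoc := hfan.snoc hz hnew hβ hβy
  have : Nat.findGreatest P (G.degree x) + 1 ≤ Nat.findGreatest P (G.degree x) :=
    Nat.le_findGreatest hsnoc.lt_degree.le ⟨_, hsnoc, by rwa [update_of_ne (by omega)]⟩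
  omega

lemma IsFan.exists_extension [DecidableEq V] (hc : G.IsPartialEdgeColoring c)
    (hfan : G.IsFan c x ys n) (hx : G.IsMissingAt c β x) (hy : G.IsMissingAt c β (ys n)) :
    ∃ c' : Sym2 V → Option C, G.IsPartialEdgeColoring c' ∧ c' s(x, ys 0) ≠ none ∧
      ∀ e, c e ≠ none → c' e ≠ none := by
  induction n generalizing c ys with
  | zero =>
    refine ⟨update c s(x, ys 0) (some β), hc.update_some hx hy, by simp, fun e he => ?_⟩
    rw [update_apply]
    split_ifs <;> simp [he]
  | succ n ih =>
    obtain ⟨γ, hγ, hγy⟩ := hfan.step 0 n.succ_pos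
    have hne : ∀ {i j}, i ≤ n + 1 → j ≤ n + 1 → i ≠ j → s(x, ys i) ≠ s(x, ys j) :=
      fun hi hj hij => mt Sym2.congr_right.mp (hfan.apply_ne hi hj hij)
    -- rotate one step: `x (ys 0)` takes the color of `x (ys 1)`, which becomes uncolored
    set c₁ := update (update c s(x, ys 1) none) s(x, ys 0) (some γ) with hc₁_def
    have hmiss : ∀ {i δ}, 0 < i → i ≤ n + 1 → G.IsMissingAt c δ (ys i) →
        G.IsMissingAt c₁ δ (ys i) := fun h0 hi h =>
      (h.update_none _).update_of_notMem (by
        simp [(hfan.adj _ hi).ne', hfan.apply_ne hi (Nat.zero_le _) h0.ne']) _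
    have hc₁ : G.IsPartialEdgeColoring c₁ := (hc.update_none _).update_some
      (hc.isMissingAt_update_none (hfan.adj 1 (by omega)) hγ) (hγy.update_none _)
    have hfan₁ : G.IsFan c₁ x (fun i => ys (i + 1)) n :=
      { injOn := fun i hi j hj h => by
          have := hfan.injOn (Set.mem_Iic.mpr (by simp_all)) (Set.mem_Iic.mpr (by simp_all)) h
          omega
        adj := fun i hi => hfan.adj (i + 1) (by omega)
        first := by simp [c₁, update_of_ne (hne (i := 1) (j := 0) (by omega) (by omega) (by omega))]
        step := fun i hi => by
          obtain ⟨δ, hδ, hδy⟩ := hfan.step (i + 1) (by omega)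
          refine ⟨δ, ?_, hmiss (by omega) (by omega) hδy⟩
          rwa [hc₁_def, update_of_ne (hne (by omega) (by omega) (by omega)),
            update_of_ne (hne (by omega) (by omega) (by omega))] }
    have hγβ : γ ≠ β := fun h => hx (hfan.adj 1 (by omega)) (h ▸ hγ)
    obtain ⟨c', hc', h₁, hext⟩ :=
      ih hc₁ hfan₁ ((hx.update_none _).update_some _ hγβ) (hmiss (by omega) le_rfl hy)
    refine ⟨c', hc', hext _ (by simp [c₁]), fun e he => ?_⟩
    by_cases he₁ : e = s(x, ys 1)
    · exact he₁ ▸ h₁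
    · refine hext e ?_
      rw [hc₁_def, update_apply]
      split_ifs
      · simp
      · rwa [update_of_ne he₁]

variable [DecidableEq C]

lemma IsFan.kempeSwap (hfan : G.IsFan c x ys n) (hα : G.IsMissingAt c α x)
    (hβ : ∀ i < n, c s(x, ys (i + 1)) = some β → (G.kempeGraph c α β).Reachable x (ys i)) :
    G.IsFan (G.kempeSwap c α β x) x ys n where
  injOn := hfan.injOn
  adj := hfan.adj
  first := kempeSwap_eq_none_iff.mpr hfan.first
  step i hi := by
    obtain ⟨γ, hγ, hγy⟩ := hfan.step i hi
    refine ⟨Equiv.swap α β γ, by rw [kempeSwap_of_reachable (Reachable.refl x), hγ]; rfl, ?_⟩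
    by_cases hreach : (G.kempeGraph c α β).Reachable x (ys i)
    · exact hγy.kempeSwap_of_reachable hreach
    · have hγα : γ ≠ α := fun h => hα (hfan.adj (i + 1) hi) (h ▸ hγ)
      have hγβ : γ ≠ β := fun h => hreach (hβ i hi (h ▸ hγ))
      rw [Equiv.swap_apply_of_ne_of_ne hγα hγβ]
      exact hγy.kempeSwap_of_not_reachable hreach

lemma exists_isFan_isMissingAt_of_closed (hc : G.IsPartialEdgeColoring c)
    (hfan : G.IsFan c x ys n) (hα : G.IsMissingAt c α x) (hβ : G.IsMissingAt c β (ys n))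
    (hclosed : ∀ z, G.Adj x z → c s(x, z) = some β → ∃ i ≤ n, ys i = z) :
    ∃ c₁ m, G.IsPartialEdgeColoring c₁ ∧ (∀ e, c₁ e = none ↔ c e = none) ∧
      G.IsFan c₁ x ys m ∧ G.IsMissingAt c₁ β x ∧ G.IsMissingAt c₁ β (ys m) := by
  by_cases hβx : G.IsMissingAt c β x
  · exact ⟨c, n, hc, fun _ => Iff.rfl, hfan, hβx, hβ⟩
  obtain ⟨z, hz, hzβ⟩ : ∃ z, G.Adj x z ∧ c s(x, z) = some β := by
    simpa [IsMissingAt] using hβx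
  obtain ⟨k, hk, rfl⟩ := hclosed z hz hzβ
  obtain ⟨j, rfl⟩ : ∃ j, k = j + 1 :=
    Nat.exists_eq_succ_of_ne_zero (by rintro rfl; simp [hfan.first] at hzβ)
  have hjn : j + 1 < n := lt_of_le_of_ne hk (by
    rintro rfl; exact hβ (hfan.adj _ le_rfl).symm (by rwa [Sym2.eq_swap]))
  have hβj : G.IsMissingAt c β (ys j) := by
    obtain ⟨γ, hγ, hγy⟩ := hfan.step j (by omega)
    obtain rfl : γ = β := Option.some_inj.mp (hγ.symm.trans hzβ)
    exact hγy
  have hβonly : ∀ i < n, c s(x, ys (i + 1)) = some β → i = j := fun i hi h => by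
    have := hfan.injOn (Set.mem_Iic.mpr (by omega)) (Set.mem_Iic.mpr (by omega))
      (hc (hfan.adj _ (by omega)) (hfan.adj _ (by omega)) h hzβ)
    omega
  have hx₁ : G.IsMissingAt (G.kempeSwap c α β x) β x := by
    simpa only [Equiv.swap_apply_left] using
      hα.kempeSwap_of_reachable (Reachable.refl (G := G.kempeGraph c α β) x)
  by_cases hj : (G.kempeGraph c α β).Reachable x (ys j)
  · -- `x`, `ys j` and `ys n` are ends of Kempe chains, so `ys n` is not on the chain of `x`
    have hn : ¬(G.kempeGraph c α β).Reachable x (ys n) :=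
      not_reachable_of_subsingleton_neighborSet hc.kempeGraph_adj_eq
        (hc.subsingleton_neighborSet_kempeGraph (Or.inl hα))
        (hc.subsingleton_neighborSet_kempeGraph (Or.inr hβj))
        (hc.subsingleton_neighborSet_kempeGraph (Or.inr hβ))
        (hfan.adj j (by omega)).ne (hfan.adj n le_rfl).ne
        (hfan.apply_ne (by omega) le_rfl (by omega)) hj
    exact ⟨_, n, hc.kempeSwap, fun _ => kempeSwap_eq_none_iff,
      hfan.kempeSwap hα fun i hi h => hβonly i hi h ▸ hj, hx₁, hβ.kempeSwap_of_not_reachable hn⟩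
  · exact ⟨_, j, hc.kempeSwap, fun _ => kempeSwap_eq_none_iff,
      (hfan.mono (by omega)).kempeSwap hα fun i hi h => absurd (hβonly i (by omega) h) (by omega),
      hx₁, hβj.kempeSwap_of_not_reachable hj⟩

end Fan

variable [Fintype C] [DecidableEq V] [DecidableEq C] [G.LocallyFinite]

theorem IsPartialEdgeColoring.exists_extension (hdeg : ∀ v, G.degree v < Fintype.card C)
    (hc : G.IsPartialEdgeColoring c) {y : V} (hxy : G.Adj x y) (h0 : c s(x, y) = none) :
    ∃ c' : Sym2 V → Option C, G.IsPartialEdgeColoring c' ∧ c' s(x, y) ≠ none ∧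
      ∀ e, c e ≠ none → c' e ≠ none := by
  obtain ⟨α, hα⟩ := G.exists_isMissingAt c (hdeg x)
  obtain ⟨ys, n, hfan, rfl, hclosed⟩ := exists_isFan_closed hxy h0
  obtain ⟨β, hβ⟩ := G.exists_isMissingAt c (hdeg (ys n))
  obtain ⟨c₁, m, hc₁, hnone, hfan₁, hx₁, hy₁⟩ :=
    exists_isFan_isMissingAt_of_closed hc hfan hα hβ fun z hz h => hclosed z β hz h hβ
  obtain ⟨c', hc', h0', hext⟩ := hfan₁.exists_extension hc₁ hx₁ hy₁
  exact ⟨c', hc', h0', fun e he => hext e (mt (hnone e).mp he)⟩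

theorem exists_isPartialEdgeColoring_forall_ne_none (hdeg : ∀ v, G.degree v < Fintype.card C)
    (s : Finset (Sym2 V)) (hs : ∀ e ∈ s, e ∈ G.edgeSet) :
    ∃ c : Sym2 V → Option C, G.IsPartialEdgeColoring c ∧ ∀ e ∈ s, c e ≠ none := by
  induction s using Finset.induction_on with
  | empty => exact ⟨fun _ => none, isPartialEdgeColoring_none, by simp⟩
  | insert e s _ ih =>
    obtain ⟨c, hc, hcs⟩ := ih fun e' he' => hs e' (Finset.mem_insert_of_mem he')
    by_cases he : c e = none
    · induction e using Sym2.ind with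
      | h x y =>
        obtain ⟨c', hc', hxy, hext⟩ :=
          hc.exists_extension hdeg (hs _ (Finset.mem_insert_self _ _)) he
        exact ⟨c', hc', by simpa [hxy] using fun e' he' => hext e' (hcs e' he')⟩
    · exact ⟨c, hc, by simpa [he] using hcs⟩

end SimpleGraph

/-- **Vizing's theorem.** Every finite simple graph with maximum degree
`Δ` admits a proper `(Δ+1)`-edge-coloring: a map from edges to `Δ+1` colors such that
distinct edges sharing an endpoint receive different colors. -/
theorem stmt_10 {V : Type*} [Fintype V] [DecidableEq V] (G : SimpleGraph V)
    [DecidableRel G.Adj] (Δ : ℕ) (hΔ : G.maxDegree = Δ) :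
    ∃ φ : Sym2 V → Fin (Δ + 1),
      ∀ e₁ ∈ G.edgeSet, ∀ e₂ ∈ G.edgeSet,
        e₁ ≠ e₂ → (∃ x, x ∈ e₁ ∧ x ∈ e₂) → φ e₁ ≠ φ e₂ := by
  obtain ⟨c, hc, hcol⟩ := G.exists_isPartialEdgeColoring_forall_ne_none (C := Fin (Δ + 1))
    (fun v => by simpa [hΔ] using Nat.lt_succ_of_le (G.degree_le_maxDegree v))
    G.edgeFinset fun e he => G.mem_edgeFinset.mp he
  refine ⟨fun e => (c e).getD 0, fun e₁ he₁ e₂ he₂ hne ⟨v, hv₁, hv₂⟩ => ?_⟩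
  obtain ⟨a, rfl⟩ := Sym2.mem_iff_exists.mp hv₁
  obtain ⟨b, rfl⟩ := Sym2.mem_iff_exists.mp hv₂
  obtain ⟨γ₁, h₁⟩ := Option.ne_none_iff_exists'.mp (hcol _ (G.mem_edgeFinset.mpr he₁))
  obtain ⟨γ₂, h₂⟩ := Option.ne_none_iff_exists'.mp (hcol _ (G.mem_edgeFinset.mpr he₂))
  simp only [h₁, h₂, Option.getD_some]
  rintro rfl
  exact hne (congrArg _ (hc he₁ he₂ h₁ h₂))
end

section
/- Let G be a finite simple graph with maximum degree Δ ≥ 1 and set p = ⌈Δ/2⌉. Then the edge set of G can be partitioned into p sets E_1, …, E_p such that each subgraph G_i = (V, E_i) has maximum degree at most 2, and the sum of the maximum degrees satisfies Δ ≤ Σ_{i=1}^{p} Δ(G_i) ≤ Δ + 1. -/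
/-!
Orient `G` so that at every vertex the out- and in-degree differ by at most one. Such an
orientation minimises `∑ v, (out v - in v) ^ 2`: if some vertex has imbalance at least `2`, the
vertices it reaches by directed paths have total imbalance `≤ 0`, and reversing a directed path
to one of negative imbalance lowers the sum. With `p = ⌈Δ/2⌉`, all out- and in-degrees are then
at most `p`, so the `V × V` arc matrix of the orientation has line sums at most `p`. Padded to
line sums exactly `p`, it is, by Birkhoff's theorem applied `p` times, a sum of `p` permutation
matrices `σ_1, …, σ_p`. Colour each edge by a `σ_i` containing one of its arcs: the edges of
colour `i` at `v` are among `s(v, σ_i v)` and `s(σ_i⁻¹ v, v)`, so every colour class has maximum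
degree at most `2`, whence `∑ Δ(G_i) ≤ 2p ≤ Δ + 1`; a vertex of degree `Δ` gives `Δ ≤ ∑ Δ(G_i)`.
-/

open Finset

theorem Finset.exists_labelled_partition {ι α : Type*} [Fintype ι] [DecidableEq α]
    (S : Finset α) (P : α → ι → Prop) (h : ∀ a ∈ S, ∃ i, P a i) :
    ∃ E : ι → Finset α, (∀ i j, i ≠ j → Disjoint (E i) (E j)) ∧ univ.biUnion E = S ∧
      ∀ i, ∀ a ∈ E i, P a i := by
  classical
  choose c hc using h
  refine ⟨fun i => {a ∈ S | ∃ ha, c a ha = i}, fun i j hij => ?_, ?_, ?_⟩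
  · refine disjoint_left.2 fun a hai haj => hij ?_
    obtain ⟨-, ha, rfl⟩ := mem_filter.1 hai
    obtain ⟨-, ha', rfl⟩ := mem_filter.1 haj
    rfl
  · ext a
    simp only [mem_biUnion, mem_univ, true_and, mem_filter]
    exact ⟨fun ⟨_, ha, _⟩ => ha, fun ha => ⟨c a ha, ha, ha, rfl⟩⟩
  · intro i a hai
    obtain ⟨-, ha, rfl⟩ := mem_filter.1 hai
    exact hc a ha

theorem Equiv.Perm.card_filter_mem_le_two {V : Type*} [DecidableEq V] (σ : Equiv.Perm V)
    {E : Finset (Sym2 V)} (hE : ∀ e ∈ E, ∃ a, e = s(a, σ a)) (v : V) :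
    #{e ∈ E | v ∈ e} ≤ 2 := by
  refine (card_le_card fun e he => ?_).trans (card_le_two (a := s(v, σ v)) (b := s(σ.symm v, v)))
  obtain ⟨he, hv⟩ := mem_filter.1 he
  obtain ⟨a, rfl⟩ := hE e he
  rcases Sym2.mem_iff.1 hv with rfl | rfl <;> simp

theorem sum_sq_lt_of_transfer {V : Type*} [Fintype V] [DecidableEq V] {f g : V → ℤ} {u w : V}
    (huw : u ≠ w) (hu : 2 ≤ f u) (hw : f w < 0)
    (hg : ∀ y, g y = f y - 2 * ((if u = y then 1 else 0) - (if w = y then 1 else 0))) :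
    ∑ y, g y ^ 2 < ∑ y, f y ^ 2 := by
  have hsq : ∀ y, g y ^ 2
      = f y ^ 2 + ((if u = y then 4 - 4 * f u else 0) + (if w = y then 4 + 4 * f w else 0)) := by
    intro y
    rw [hg]
    split_ifs <;> subst_vars <;> first | exact absurd rfl huw | ring
  simp only [hsq, sum_add_distrib, sum_ite_eq, mem_univ, if_true]
  linarith

theorem List.Nodup.card_filter_toFinset {α : Type*} [DecidableEq α] {l : List α} (hl : l.Nodup)
    (P : α → Prop) [DecidablePred P] : #{a ∈ l.toFinset | P a} = l.countP (P ·) := by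
  rw [List.countP_eq_length_filter, ← List.toFinset_card_of_nodup (hl.filter _),
    List.toFinset_filter]
  simp only [decide_eq_true_eq]

section PermDecomposition

variable {V : Type*} [Fintype V] [DecidableEq V]

theorem exists_perm_forall_pos {p : ℕ} (hp : 0 < p) (M : V → V → ℕ)
    (hrow : ∀ u, ∑ x, M u x = p) (hcol : ∀ x, ∑ u, M u x = p) :
    ∃ τ : Equiv.Perm V, ∀ u, 0 < M u (τ u) := by
  set Q : Matrix V V ℚ := fun u x => M u x / p
  have hQ : Q ∈ doublyStochastic ℚ V := by
    refine mem_doublyStochastic_iff_sum.2 ⟨fun u x => by positivity, fun u => ?_, fun x => ?_⟩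
    · simp only [Q, ← Finset.sum_div, ← Nat.cast_sum, hrow]; field_simp
    · simp only [Q, ← Finset.sum_div, ← Nat.cast_sum, hcol]; field_simp
  -- A permutation of positive weight in Birkhoff's decomposition of `Q` lies in the support of `M`.
  obtain ⟨w, hw0, hw1, hwQ⟩ := exists_eq_sum_perm_of_mem_doublyStochastic hQ
  obtain ⟨τ, -, hτ⟩ := exists_lt_of_sum_lt (f := 0) (s := univ) (g := w) (by simp [hw1])
  refine ⟨τ, fun u => ?_⟩
  have : 0 < Q u (τ u) := by
    rw [← hwQ, Matrix.sum_apply]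
    refine Finset.sum_pos' (fun σ _ => smul_nonneg (hw0 σ)
      (nonneg_of_mem_doublyStochastic permMatrix_mem_doublyStochastic)) ⟨τ, mem_univ _, ?_⟩
    simpa [Equiv.Perm.permMatrix, PEquiv.toMatrix_apply] using hτ
  simpa [Q, hp] using this

theorem exists_perms_of_sums_eq (p : ℕ) (M : V → V → ℕ)
    (hrow : ∀ u, ∑ x, M u x = p) (hcol : ∀ x, ∑ u, M u x = p) :
    ∃ σ : Fin p → Equiv.Perm V, ∀ u x, M u x = #{i | σ i u = x} := by
  induction p generalizing M with
  | zero =>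
    refine ⟨Fin.elim0, fun u x => ?_⟩
    simpa using (sum_eq_zero_iff.1 (hrow u)) x (mem_univ x)
  | succ p ih =>
    obtain ⟨τ, hτ⟩ := exists_perm_forall_pos p.succ_pos M hrow hcol
    have hle : ∀ u x, (if τ u = x then 1 else 0) ≤ M u x := by
      intro u x; split_ifs with h
      · exact h ▸ hτ u
      · exact Nat.zero_le _
    set M' : V → V → ℕ := fun u x => M u x - if τ u = x then 1 else 0
    have hrow' : ∀ u, ∑ x, M' u x = p := fun u => by
      rw [sum_tsub_distrib _ fun x _ => hle u x, hrow, sum_ite_eq, if_pos (mem_univ _),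
        Nat.add_sub_cancel]
    have hcol' : ∀ x, ∑ u, M' u x = p := fun x => by
      simp_rw [M', ← Equiv.eq_symm_apply]
      rw [sum_tsub_distrib _ fun u _ => by simpa only [Equiv.eq_symm_apply] using hle u x, hcol,
        sum_ite_eq', if_pos (mem_univ _), Nat.add_sub_cancel]
    obtain ⟨σ, hσ⟩ := ih M' hrow' hcol'
    refine ⟨Fin.cons τ σ, fun u x => ?_⟩
    rw [card_filter, Fin.sum_univ_succ, ← card_filter]
    simp only [Fin.cons_zero, Fin.cons_succ, ← hσ, M']
    have := hle u x
    omega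

theorem exists_le_of_sums_le (p : ℕ) (M : V → V → ℕ)
    (hrow : ∀ u, ∑ x, M u x ≤ p) (hcol : ∀ x, ∑ u, M u x ≤ p) :
    ∃ N, M ≤ N ∧ (∀ u, ∑ x, N u x = p) ∧ ∀ x, ∑ u, N u x = p := by
  by_cases hfull : ∀ u, ∑ x, M u x = p
  · refine ⟨M, le_rfl, hfull, fun x => ?_⟩
    have htot : ∑ x, ∑ u, M u x = ∑ _x : V, p := by rw [sum_comm]; simp only [hfull]
    exact (sum_eq_sum_iff_of_le fun x _ => hcol x).1 htot x (mem_univ x)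
  push Not at hfull
  obtain ⟨u, hu⟩ := hfull
  have htot : ∑ u, ∑ x, M u x < ∑ _u : V, p :=
    sum_lt_sum (fun u _ => hrow u) ⟨u, mem_univ _, (hrow u).lt_of_ne hu⟩
  obtain ⟨x, -, hx⟩ := exists_lt_of_sum_lt (sum_comm.symm.trans_lt htot)
  set M' : V → V → ℕ := fun a b => M a b + if a = u ∧ b = x then 1 else 0
  have hrow' : ∀ a, ∑ b, M' a b = ∑ b, M a b + if a = u then 1 else 0 := by
    intro a; simp [M', sum_add_distrib, ite_and]
  have hcol' : ∀ b, ∑ a, M' a b = ∑ a, M a b + if b = x then 1 else 0 := by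
    intro b; simp [M', sum_add_distrib, ite_and]
  have hrowM' : ∀ a, ∑ b, M' a b ≤ p := fun a => by
    rw [hrow']; split_ifs with h
    · subst h; exact (hrow a).lt_of_ne hu
    · simpa using hrow a
  have hcolM' : ∀ b, ∑ a, M' a b ≤ p := fun b => by
    rw [hcol']; split_ifs with h
    · subst h; exact hx
    · simpa using hcol b
  have htot' : ∑ a, ∑ b, M' a b = ∑ a, ∑ b, M a b + 1 := by
    rw [sum_congr rfl fun a _ => hrow' a, sum_add_distrib, sum_ite_eq', if_pos (mem_univ _)]
  obtain ⟨N, hMN, hN⟩ := exists_le_of_sums_le p M' hrowM' hcolM'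
  exact ⟨N, le_trans (fun a b => Nat.le_add_right _ _) hMN, hN⟩
termination_by p * Fintype.card V - ∑ u, ∑ x, M u x
decreasing_by
  rw [htot']
  simp only [sum_const, card_univ, smul_eq_mul] at htot
  rw [mul_comm] at htot
  omega

theorem exists_perms_of_sums_le (p : ℕ) (M : V → V → ℕ)
    (hrow : ∀ u, ∑ x, M u x ≤ p) (hcol : ∀ x, ∑ u, M u x ≤ p) :
    ∃ σ : Fin p → Equiv.Perm V, ∀ u x, M u x ≤ #{i | σ i u = x} := by
  obtain ⟨N, hMN, hNrow, hNcol⟩ := exists_le_of_sums_le p M hrow hcol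
  obtain ⟨σ, hσ⟩ := exists_perms_of_sums_eq p N hNrow hNcol
  exact ⟨σ, fun u x => (hMN u x).trans (hσ u x).le⟩

end PermDecomposition

namespace SimpleGraph

variable {V : Type*} {G : SimpleGraph V}

theorem Walk.countP_darts_fst_add [DecidableEq V] {u w : V} (p : G.Walk u w) (v : V) :
    p.darts.countP (·.fst = v) + (if w = v then 1 else 0)
      = p.darts.countP (·.snd = v) + (if u = v then 1 else 0) := by
  induction p with
  | nil => simp
  | cons h p ih =>
    simp only [Walk.darts_cons, List.countP_cons] at ih ⊢
    split_ifs at ih ⊢ <;> simp_all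

def IsOrientation (A : Finset G.Dart) : Prop := ∀ d, d.symm ∈ A ↔ d ∉ A

variable (G) in
theorem exists_isOrientation [Fintype V] [DecidableRel G.Adj] :
    ∃ A : Finset G.Dart, IsOrientation A := by
  let f := Fintype.equivFin V
  refine ⟨univ.filter fun d => f d.fst < f d.snd, fun d => ?_⟩
  have hne : f d.fst ≠ f d.snd := f.injective.ne d.adj.ne
  simp only [mem_filter_univ, Dart.symm_toProd, Prod.fst_swap, Prod.snd_swap, not_lt]
  exact ⟨le_of_lt, fun h => h.lt_of_ne' hne⟩

section Orientation

variable [DecidableEq V]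

def outDeg (A : Finset G.Dart) (v : V) : ℕ := #{d ∈ A | d.fst = v}

def inDeg (A : Finset G.Dart) (v : V) : ℕ := #{d ∈ A | d.snd = v}

def imbalance (A : Finset G.Dart) (v : V) : ℤ := outDeg A v - inDeg A v

def potential [Fintype V] (A : Finset G.Dart) : ℤ := ∑ v, imbalance A v ^ 2

def reverseArcs (A D : Finset G.Dart) : Finset G.Dart := A \ D ∪ D.image Dart.symm

variable {A D : Finset G.Dart}

theorem IsOrientation.notMem_of_mem_image_symm (hA : IsOrientation A) (hD : D ⊆ A) {d : G.Dart}
    (hd : d ∈ D.image Dart.symm) : d ∉ A := by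
  obtain ⟨d', hd', rfl⟩ := mem_image.1 hd
  exact fun h => (hA d').1 h (hD hd')

theorem isOrientation_reverseArcs (hA : IsOrientation A) (hD : D ⊆ A) :
    IsOrientation (reverseArcs A D) := fun d => by
  have hinj := (Dart.symm_involutive (G := G)).injective
  have hmem : d.symm ∈ D.image Dart.symm ↔ d ∈ D := hinj.mem_finset_image
  have hmem' : d.symm ∈ D ↔ d ∈ D.image Dart.symm := by
    rw [← hinj.mem_finset_image, Dart.symm_symm]
  have hsymm := hA.notMem_of_mem_image_symm hD (d := d)
  have hsub := @hD d
  simp only [SimpleGraph.reverseArcs, mem_union, mem_sdiff, hmem, hmem', hA d]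
  tauto

theorem card_filter_reverseArcs (hA : IsOrientation A) (hD : D ⊆ A) (f g : G.Dart → V)
    (hfg : ∀ d, f d.symm = g d) (v : V) :
    #{d ∈ reverseArcs A D | f d = v} + #{d ∈ D | f d = v}
      = #{d ∈ A | f d = v} + #{d ∈ D | g d = v} := by
  have hdisj : Disjoint (A \ D) (D.image Dart.symm) :=
    Finset.disjoint_left.2 fun _ hd hd' => hA.notMem_of_mem_image_symm hD hd' (mem_sdiff.1 hd).1
  have himage : #{d ∈ D.image Dart.symm | f d = v} = #{d ∈ D | g d = v} := by
    rw [filter_image, card_image_of_injective _ Dart.symm_involutive.injective]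
    simp only [hfg]
  rw [SimpleGraph.reverseArcs, filter_union, card_union_of_disjoint (disjoint_filter_filter hdisj),
    himage]
  have hsdiff : {d ∈ A \ D | f d = v} = {d ∈ A | f d = v} \ {d ∈ D | f d = v} := by
    ext d; simp only [mem_filter, mem_sdiff]; tauto
  rw [hsdiff, add_right_comm, card_sdiff_add_card_eq_card (filter_subset_filter _ hD)]

theorem IsOrientation.imbalance_reverseArcs (hA : IsOrientation A) {u w : V} {p : G.Walk u w}
    (hp : p.IsPath) (hpA : p.darts.toFinset ⊆ A) (y : V) :
    imbalance (reverseArcs A p.darts.toFinset) y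
      = imbalance A y - 2 * ((if u = y then 1 else 0) - (if w = y then 1 else 0)) := by
  have hnd := Walk.darts_nodup_of_support_nodup hp.support_nodup
  have hout := card_filter_reverseArcs hA hpA (·.fst) (·.snd) (fun _ => rfl) y
  have hin := card_filter_reverseArcs hA hpA (·.snd) (·.fst) (fun _ => rfl) y
  have hcount := p.countP_darts_fst_add y
  rw [hnd.card_filter_toFinset, hnd.card_filter_toFinset] at hout hin
  simp only [imbalance, outDeg, inDeg]
  split_ifs at hcount ⊢ <;> omega

theorem exists_path_imbalance_neg [Fintype V] {v : V} (hv : 0 < imbalance A v) :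
    ∃ w, imbalance A w < 0 ∧ ∃ p : G.Walk v w, p.IsPath ∧ p.darts.toFinset ⊆ A := by
  classical
  set R : Finset V := univ.filter fun y => ∃ p : G.Walk v y, ∀ d ∈ p.darts, d ∈ A
  have hvR : v ∈ R := (mem_filter_univ _).2 ⟨Walk.nil, by simp⟩
  have hclosed : {d ∈ A | d.fst ∈ R} ⊆ {d ∈ A | d.snd ∈ R} := by
    intro d hd
    simp only [R, mem_filter, mem_univ, true_and] at hd ⊢
    obtain ⟨hdA, p, hp⟩ := hd
    refine ⟨hdA, p.concat d.adj, fun d' hd' => ?_⟩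
    rw [Walk.darts_concat, List.concat_eq_append, List.mem_append, List.mem_singleton] at hd'
    rcases hd' with hd' | rfl
    · exact hp d' hd'
    · exact hdA
  have hsum : ∑ y ∈ R, imbalance A y ≤ 0 := by
    have hout := sum_card_fiberwise_eq_card_filter A R (·.fst)
    have hin := sum_card_fiberwise_eq_card_filter A R (·.snd)
    have hle := card_le_card hclosed
    simp only [imbalance, sum_sub_distrib, outDeg, inDeg, ← Nat.cast_sum]
    omega
  obtain ⟨w, hwR, hw⟩ : ∃ w ∈ R, imbalance A w < 0 := by
    by_contra! h
    have := single_le_sum h hvR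
    omega
  obtain ⟨p, hp⟩ := (mem_filter_univ _).1 hwR
  exact ⟨w, hw, p.bypass, p.bypass_isPath,
    fun d hd => hp d (p.darts_bypass_subset_darts (List.mem_toFinset.1 hd))⟩

theorem IsOrientation.exists_potential_lt [Fintype V] (hA : IsOrientation A) {v : V}
    (hv : 2 ≤ imbalance A v) :
    ∃ A' : Finset G.Dart, IsOrientation A' ∧ potential A' < potential A := by
  obtain ⟨w, hw, p, hp, hpA⟩ := exists_path_imbalance_neg (by omega : 0 < imbalance A v)
  refine ⟨_, isOrientation_reverseArcs hA hpA,
    sum_sq_lt_of_transfer ?_ hv hw (hA.imbalance_reverseArcs hp hpA)⟩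
  rintro rfl
  omega

def arcMatrix (A : Finset G.Dart) (a b : V) : ℕ := #{d ∈ A | d.fst = a ∧ d.snd = b}

theorem sum_arcMatrix_right [Fintype V] (A : Finset G.Dart) (a : V) :
    ∑ b, arcMatrix A a b = outDeg A a := by
  simp only [arcMatrix, outDeg, ← filter_filter, sum_card_fiberwise_eq_card_filter, mem_univ,
    filter_true]

theorem sum_arcMatrix_left [Fintype V] (A : Finset G.Dart) (b : V) :
    ∑ a, arcMatrix A a b = inDeg A b := by
  have hswap : ∀ a, arcMatrix A a b = #{d ∈ {d ∈ A | d.snd = b} | d.fst = a} := fun a => by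
    simp only [arcMatrix, filter_filter, and_comm]
  simp only [hswap, inDeg, sum_card_fiberwise_eq_card_filter, mem_univ, filter_true]

end Orientation

variable [Fintype V] [DecidableEq V] [DecidableRel G.Adj] {A : Finset G.Dart}

theorem IsOrientation.compl (hA : IsOrientation A) : IsOrientation Aᶜ := fun d => by
  simp only [mem_compl, hA d, not_not]

theorem IsOrientation.inDeg_eq_outDeg_compl (hA : IsOrientation A) (v : V) :
    inDeg A v = outDeg Aᶜ v := by
  refine card_nbij' Dart.symm Dart.symm (fun d hd => ?_) (fun d hd => ?_)
    (fun d _ => d.symm_symm) (fun d _ => d.symm_symm)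
  · simp only [coe_filter, Set.mem_ofPred_eq, mem_compl] at hd ⊢
    exact ⟨(hA d.symm).1 (by rw [d.symm_symm]; exact hd.1), hd.2⟩
  · simp only [coe_filter, Set.mem_ofPred_eq, mem_compl] at hd ⊢
    exact ⟨(hA d).2 hd.1, hd.2⟩

theorem IsOrientation.outDeg_add_inDeg (hA : IsOrientation A) (v : V) :
    outDeg A v + inDeg A v = G.degree v := by
  rw [hA.inDeg_eq_outDeg_compl, outDeg, outDeg, ← G.dart_fst_fiber_card_eq_degree,
    ← card_union_of_disjoint (disjoint_filter_filter disjoint_compl_right), ← filter_union,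
    union_compl]

theorem IsOrientation.imbalance_compl (hA : IsOrientation A) (v : V) :
    imbalance Aᶜ v = -imbalance A v := by
  rw [imbalance, imbalance, ← hA.inDeg_eq_outDeg_compl, hA.compl.inDeg_eq_outDeg_compl,
    compl_compl]
  ring

variable (G) in
theorem exists_isOrientation_abs_imbalance_le_one :
    ∃ A : Finset G.Dart, IsOrientation A ∧ ∀ v, |imbalance A v| ≤ 1 := by
  classical
  obtain ⟨A₀, hA₀⟩ := exists_isOrientation G
  obtain ⟨A, hA, hmin⟩ :=
    (univ.filter IsOrientation).exists_min_image potential ⟨A₀, (mem_filter_univ _).2 hA₀⟩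
  replace hA : IsOrientation A := (mem_filter_univ _).1 hA
  have hmin' : ∀ A', IsOrientation A' → potential A ≤ potential A' :=
    fun A' hA' => hmin A' ((mem_filter_univ _).2 hA')
  refine ⟨A, hA, fun v => abs_le.2 ⟨?_, ?_⟩⟩ <;> by_contra! hv
  · obtain ⟨A', hA', hlt⟩ := hA.compl.exists_potential_lt (v := v)
      (by rw [hA.imbalance_compl]; omega)
    have hpot : potential Aᶜ = potential A := by simp only [potential, hA.imbalance_compl, neg_sq]
    exact (hmin' A' hA').not_gt (hpot ▸ hlt)
  · obtain ⟨A', hA', hlt⟩ := hA.exists_potential_lt (by omega : 2 ≤ imbalance A v)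
    exact (hmin' A' hA').not_gt hlt

theorem exists_perms_forall_adj {p : ℕ} (hG : G.maxDegree ≤ 2 * p) :
    ∃ σ : Fin p → Equiv.Perm V, ∀ a b, G.Adj a b → ∃ i, σ i a = b ∨ σ i b = a := by
  obtain ⟨A, hA, hbal⟩ := exists_isOrientation_abs_imbalance_le_one G
  have hle : ∀ v, outDeg A v ≤ p ∧ inDeg A v ≤ p := fun v => by
    have hdeg := hA.outDeg_add_inDeg v
    have hmax := G.degree_le_maxDegree v
    have hv := abs_le.1 (hbal v)
    simp only [imbalance] at hv
    omega
  obtain ⟨σ, hσ⟩ := exists_perms_of_sums_le p (arcMatrix A)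
    (fun a => (sum_arcMatrix_right A a).trans_le (hle a).1)
    (fun b => (sum_arcMatrix_left A b).trans_le (hle b).2)
  have hcover : ∀ d ∈ A, ∃ i, σ i d.fst = d.snd := fun d hd => by
    have hM : 0 < arcMatrix A d.fst d.snd := card_pos.2 ⟨d, mem_filter.2 ⟨hd, rfl, rfl⟩⟩
    obtain ⟨i, hi⟩ := card_pos.1 (hM.trans_le (hσ _ _))
    exact ⟨i, (mem_filter.1 hi).2⟩
  refine ⟨σ, fun a b hab => ?_⟩
  by_cases hd : (⟨(a, b), hab⟩ : G.Dart) ∈ A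
  · obtain ⟨i, hi⟩ := hcover _ hd
    exact ⟨i, Or.inl hi⟩
  · obtain ⟨i, hi⟩ := hcover _ ((hA _).2 hd)
    exact ⟨i, Or.inr hi⟩

theorem exists_edge_partition_of_maxDegree_le {p : ℕ} (hG : G.maxDegree ≤ 2 * p) :
    ∃ E : Fin p → Finset (Sym2 V), (∀ i j, i ≠ j → Disjoint (E i) (E j)) ∧
      univ.biUnion E = G.edgeFinset ∧ ∀ i v, #{e ∈ E i | v ∈ e} ≤ 2 := by
  obtain ⟨σ, hσ⟩ := exists_perms_forall_adj hG
  obtain ⟨E, hdisj, hunion, hE⟩ := G.edgeFinset.exists_labelled_partition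
    (fun e i => ∃ a, e = s(a, σ i a)) fun e he => by
      induction e using Sym2.ind with
      | h a b =>
        obtain ⟨i, hi | hi⟩ := hσ a b (mem_edgeFinset.1 he)
        · exact ⟨i, a, hi ▸ rfl⟩
        · exact ⟨i, b, hi ▸ Sym2.eq_swap⟩
  exact ⟨E, hdisj, hunion, fun i => (σ i).card_filter_mem_le_two (hE i)⟩

theorem sum_card_filter_mem_eq_degree {ι : Type*} [Fintype ι] {E : ι → Finset (Sym2 V)}
    (hdisj : ∀ i j, i ≠ j → Disjoint (E i) (E j)) (hunion : univ.biUnion E = G.edgeFinset)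
    (v : V) : ∑ i, #{e ∈ E i | v ∈ e} = G.degree v := by
  rw [← card_incidenceFinset_eq_degree, incidenceFinset_eq_filter, ← hunion, filter_biUnion,
    card_biUnion fun i _ j _ hij => disjoint_filter_filter (hdisj i j hij)]

end SimpleGraph

/-- Let `G` have maximum degree `Δ ≥ 1` and put `p = ⌈Δ/2⌉`. Then the
edge set of `G` can be partitioned into `p` sets `E_1, …, E_p` such that every subgraph
`(V, E_i)` has maximum degree at most `2`, and the sum of the maximum degrees of the
subgraphs is between `Δ` and `Δ + 1`. -/
theorem stmt_12 {V : Type*} [Fintype V] [DecidableEq V] (G : SimpleGraph V)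
    [DecidableRel G.Adj] (Δ : ℕ) (hΔ : G.maxDegree = Δ) (hΔ1 : 1 ≤ Δ) :
    ∃ E : Fin ((Δ + 1) / 2) → Finset (Sym2 V),
      (∀ i j, i ≠ j → Disjoint (E i) (E j)) ∧
      (Finset.univ.biUnion E = G.edgeFinset) ∧
      (∀ i, ∀ v : V, ((E i).filter (fun e => v ∈ e)).card ≤ 2) ∧
      Δ ≤ (∑ i, Finset.univ.sup (fun v : V => ((E i).filter (fun e => v ∈ e)).card)) ∧
      (∑ i, Finset.univ.sup (fun v : V => ((E i).filter (fun e => v ∈ e)).card)) ≤ Δ + 1 := by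
  have hG : G.maxDegree ≤ 2 * ((Δ + 1) / 2) := by omega
  obtain ⟨E, hdisj, hunion, hE⟩ := SimpleGraph.exists_edge_partition_of_maxDegree_le hG
  have : Nonempty V := by
    by_contra! h
    have := G.maxDegree_le_of_forall_degree_le 0 fun v => (h.false v).elim
    omega
  obtain ⟨v, hv⟩ := G.exists_maximal_degree_vertex
  refine ⟨E, hdisj, hunion, hE, ?_, ?_⟩
  · calc Δ = ∑ i, #{e ∈ E i | v ∈ e} := by
          rw [SimpleGraph.sum_card_filter_mem_eq_degree hdisj hunion, ← hv, hΔ]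
      _ ≤ _ := sum_le_sum fun i _ => le_sup (f := fun v => #{e ∈ E i | v ∈ e}) (mem_univ v)
  · calc _ ≤ ∑ _i : Fin ((Δ + 1) / 2), 2 := sum_le_sum fun i _ => Finset.sup_le fun v _ => hE i v
      _ ≤ Δ + 1 := by simp only [sum_const, card_univ, Fintype.card_fin, smul_eq_mul]; omega
end

section
/- Let G be a finite simple graph with maximum degree Δ and let h ≥ 0 be an integer. Then the edge set of G can be partitioned into 2^h sets E_1, …, E_{2^h} such that each subgraph (V, E_j) has maximum degree at most ⌊Δ/2^h⌋ + 2. -/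
/-!
For `A ⊆ E` call `2 deg_A v - deg_E v` the imbalance of `A` at `v`. A set `A` minimizing the
sum of the squared imbalances has all imbalances in `[-2, 2]`. Indeed, if the imbalance at `v` is
at least `3`, take a maximal trail from `v` whose edges alternate between `A` and `E \ A`,
starting in `A`, and move each of its edges to the other side. The imbalance changes only at the
two ends of the trail: at `v` it drops by `2` or `4`, and maximality of the trail says that at the
far end its absolute value does not grow, so the potential decreases.
Thus every edge set splits into two parts of degrees at most `⌊d/2⌋ + 1`, and `h` rounds of
splitting give degrees at most `⌊Δ/2^h⌋ + 2`, because `⌊(q + 2)/2⌋ + 1 = ⌊q/2⌋ + 2`.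
-/

open Finset Function
open scoped symmDiff

namespace EdgePartition

variable {V : Type*} [DecidableEq V]

def edgeDegree (X : Finset (Sym2 V)) (v : V) : ℕ := #{e ∈ X | v ∈ e}

lemma edgeDegree_mono {X Y : Finset (Sym2 V)} (h : X ⊆ Y) (v : V) :
    edgeDegree X v ≤ edgeDegree Y v :=
  card_le_card (filter_subset_filter _ h)

lemma edgeDegree_union_of_disjoint {X Y : Finset (Sym2 V)} (h : Disjoint X Y) (v : V) :
    edgeDegree (X ∪ Y) v = edgeDegree X v + edgeDegree Y v := by
  rw [edgeDegree, filter_union, card_union_of_disjoint (disjoint_filter_filter h)]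
  rfl

lemma edgeDegree_sdiff_add {A X : Finset (Sym2 V)} (h : A ⊆ X) (v : V) :
    edgeDegree (X \ A) v + edgeDegree A v = edgeDegree X v := by
  rw [← edgeDegree_union_of_disjoint sdiff_disjoint, sdiff_union_of_subset h]

lemma edgeDegree_insert {X : Finset (Sym2 V)} {f : Sym2 V} (hf : f ∉ X) (v : V) :
    edgeDegree (insert f X) v = edgeDegree X v + if v ∈ f then 1 else 0 := by
  rw [edgeDegree, filter_insert]
  split_ifs with hv
  · exact card_insert_of_notMem fun h => hf (mem_filter.1 h).1
  · rfl

def signedDegree (A S : Finset (Sym2 V)) (w : V) : ℤ :=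
  edgeDegree (A ∩ S) w - edgeDegree (S \ A) w

lemma signedDegree_empty (A : Finset (Sym2 V)) (w : V) : signedDegree A ∅ w = 0 := by
  simp [signedDegree, edgeDegree]

lemma signedDegree_insert {A S : Finset (Sym2 V)} {f : Sym2 V} (hf : f ∉ S) (w : V) :
    signedDegree A (insert f S) w =
      signedDegree A S w + (if f ∈ A then 1 else -1) * if w ∈ f then 1 else 0 := by
  unfold signedDegree
  by_cases hfA : f ∈ A
  · rw [inter_insert_of_mem hfA, insert_sdiff_of_mem _ hfA,
      edgeDegree_insert fun h => hf (mem_inter.1 h).2, if_pos hfA]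
    split_ifs <;> push_cast <;> ring
  · rw [inter_insert_of_notMem hfA, insert_sdiff_of_notMem _ hfA,
      edgeDegree_insert fun h => hf (mem_sdiff.1 h).1, if_neg hfA]
    split_ifs <;> push_cast <;> ring

lemma edgeDegree_symmDiff (A S : Finset (Sym2 V)) (w : V) :
    (edgeDegree (A ∆ S) w : ℤ) = edgeDegree A w - signedDegree A S w := by
  have hA := edgeDegree_union_of_disjoint (disjoint_sdiff_inter A S) w
  rw [sdiff_union_inter] at hA
  rw [symmDiff_def, sup_eq_union, edgeDegree_union_of_disjoint disjoint_sdiff_sdiff, hA,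
    signedDegree]
  push_cast
  ring

def imbalance (E A : Finset (Sym2 V)) (w : V) : ℤ := 2 * edgeDegree A w - edgeDegree E w

lemma imbalance_sdiff {E A : Finset (Sym2 V)} (hA : A ⊆ E) (w : V) :
    imbalance E (E \ A) w = -imbalance E A w := by
  have := edgeDegree_sdiff_add hA w
  simp only [imbalance]
  omega

lemma imbalance_symmDiff (E A S : Finset (Sym2 V)) (w : V) :
    imbalance E (A ∆ S) w = imbalance E A w - 2 * signedDegree A S w := by
  rw [imbalance, imbalance, edgeDegree_symmDiff]
  ring

lemma imbalance_le_signedDegree {E A S : Finset (Sym2 V)} (hA : A ⊆ E) (hS : S ⊆ E) {z : V}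
    (h : ∀ f ∈ A, z ∈ f → f ∈ S) : imbalance E A z ≤ signedDegree A S z := by
  have hAS : edgeDegree A z ≤ edgeDegree (A ∩ S) z :=
    card_le_card fun f hf => by
      obtain ⟨hfA, hzf⟩ := mem_filter.1 hf
      exact mem_filter.2 ⟨mem_inter.2 ⟨hfA, h f hfA hzf⟩, hzf⟩
  have hSA := edgeDegree_mono (sdiff_subset_sdiff hS le_rfl : S \ A ⊆ E \ A) z
  have := edgeDegree_sdiff_add hA z
  simp only [imbalance, signedDegree]
  omega

lemma signedDegree_le_imbalance {E A S : Finset (Sym2 V)} (hA : A ⊆ E) {z : V}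
    (h : ∀ f ∈ E \ A, z ∈ f → f ∈ S) : signedDegree A S z ≤ imbalance E A z := by
  have hSA : edgeDegree (E \ A) z ≤ edgeDegree (S \ A) z :=
    card_le_card fun f hf => by
      obtain ⟨hfEA, hzf⟩ := mem_filter.1 hf
      exact mem_filter.2 ⟨mem_sdiff.2 ⟨h f hfEA hzf, (mem_sdiff.1 hfEA).2⟩, hzf⟩
  have hAS := edgeDegree_mono (inter_subset_left : A ∩ S ⊆ A) z
  have := edgeDegree_sdiff_add hA z
  simp only [imbalance, signedDegree]
  omega

/-- `S` behaves, as far as signed degrees are concerned, like an alternating trail from `v` to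
`z` whose next edge has to lie in `A` if `σ = 1` and outside `A` if `σ = -1`: flipping it
changes the `A`-degrees only at its two ends. -/
def IsAlternatingTrail (E A : Finset (Sym2 V)) (v : V) (S : Finset (Sym2 V)) (z : V)
    (σ : ℤˣ) : Prop :=
  S ⊆ E ∧ ∀ w, signedDegree A S w = (if w = v then 1 else 0) - σ * if w = z then 1 else 0

variable {E A : Finset (Sym2 V)} {v : V}

lemma isAlternatingTrail_empty : IsAlternatingTrail E A v ∅ v 1 :=
  ⟨empty_subset E, fun w => by simp [signedDegree_empty]⟩

lemma IsAlternatingTrail.extend (hE : ∀ e ∈ E, ¬e.IsDiag) {S : Finset (Sym2 V)} {z y : V}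
    {σ : ℤˣ} (h : IsAlternatingTrail E A v S z σ) (hzy : s(z, y) ∈ E) (hS : s(z, y) ∉ S)
    (hA : s(z, y) ∈ A ↔ σ = 1) : IsAlternatingTrail E A v (insert s(z, y) S) y (-σ) := by
  have hne : z ≠ y := fun h => hE _ hzy (Sym2.mk_isDiag_iff.2 h)
  have hsign : (if s(z, y) ∈ A then 1 else -1 : ℤ) = σ := by
    rcases Int.units_eq_one_or σ with rfl | rfl <;> simp_all
  refine ⟨insert_subset hzy h.1, fun w => ?_⟩
  rw [signedDegree_insert hS, h.2 w, hsign]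
  by_cases hwz : w = z
  · subst hwz
    simp [hne]
  · by_cases hwy : w = y <;> simp [hwz, hwy, hne.symm]

lemma IsAlternatingTrail.exists_maximal (hE : ∀ e ∈ E, ¬e.IsDiag) {S : Finset (Sym2 V)} {z : V}
    {σ : ℤˣ} (h : IsAlternatingTrail E A v S z σ) :
    ∃ S' z' σ', IsAlternatingTrail E A v S' z' σ' ∧
      ∀ f ∈ E, z' ∈ f → (f ∈ A ↔ σ' = 1) → f ∈ S' := by
  by_cases hstuck : ∀ f ∈ E, z ∈ f → (f ∈ A ↔ σ = 1) → f ∈ S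
  · exact ⟨S, z, σ, h, hstuck⟩
  push Not at hstuck
  obtain ⟨f, hfE, hzf, hfA, hfS⟩ := hstuck
  obtain ⟨y, rfl⟩ := Sym2.mem_iff_exists.1 hzf
  have : #(E \ insert s(z, y) S) < #(E \ S) := by
    rw [sdiff_insert]
    exact card_erase_lt_of_mem (mem_sdiff.2 ⟨hfE, hfS⟩)
  exact (h.extend hE hfE hfS hfA).exists_maximal hE
termination_by #(E \ S)

variable [Fintype V]

def potential (E A : Finset (Sym2 V)) : ℤ := ∑ w, imbalance E A w ^ 2

lemma potential_sdiff (hA : A ⊆ E) : potential E (E \ A) = potential E A := by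
  simp only [potential, imbalance_sdiff hA, neg_sq]

lemma potential_symmDiff (S : Finset (Sym2 V)) :
    potential E (A ∆ S) =
      potential E A + 4 * ∑ w, signedDegree A S w * (signedDegree A S w - imbalance E A w) := by
  simp only [potential, imbalance_symmDiff, mul_sum, ← sum_add_distrib]
  exact sum_congr rfl fun w _ => by ring

lemma exists_potential_lt (hE : ∀ e ∈ E, ¬e.IsDiag) (hA : A ⊆ E) (hv : 3 ≤ imbalance E A v) :
    ∃ A' ⊆ E, potential E A' < potential E A := by
  obtain ⟨S, z, σ, ⟨hSE, hκ⟩, hstuck⟩ :=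
    (isAlternatingTrail_empty (E := E) (A := A) (v := v)).exists_maximal hE
  have hz : 0 ≤ (σ : ℤ) * (signedDegree A S z - imbalance E A z) := by
    rcases Int.units_eq_one_or σ with rfl | rfl
    · have := imbalance_le_signedDegree hA hSE fun f hf hzf => hstuck f (hA hf) hzf (by simpa)
      simp only [Units.val_one, one_mul]
      linarith
    · have := signedDegree_le_imbalance (S := S) hA fun f hf hzf =>
        hstuck f (mem_sdiff.1 hf).1 hzf (by simp [(mem_sdiff.1 hf).2])
      simp only [Units.val_neg, Units.val_one, neg_mul, one_mul]
      linarith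
  have hv_neg : signedDegree A S v * (signedDegree A S v - imbalance E A v) < 0 := by
    by_cases hzv : z = v
    · subst hzv
      rw [hκ] at hz ⊢
      rcases Int.units_eq_one_or σ with rfl | rfl <;> simp at hz ⊢ <;> linarith
    · rw [hκ, if_pos rfl, if_neg (Ne.symm hzv)]
      linarith
  have hle : ∀ w, signedDegree A S w * (signedDegree A S w - imbalance E A w) ≤ 0 := by
    intro w
    by_cases hwv : w = v
    · exact hwv ▸ hv_neg.le
    by_cases hwz : w = z
    · subst hwz
      rw [hκ, if_neg hwv, if_pos rfl] at hz ⊢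
      nlinarith
    · simp [hκ, hwv, hwz]
  refine ⟨A ∆ S, symmDiff_le_sup.trans (union_subset hA hSE), ?_⟩
  rw [potential_symmDiff]
  have := sum_lt_sum (s := univ) (fun w _ => hle w) ⟨v, mem_univ v, hv_neg⟩
  simp only [sum_const_zero] at this
  linarith

theorem exists_imbalance_le_two (hE : ∀ e ∈ E, ¬e.IsDiag) :
    ∃ A ⊆ E, ∀ v, |imbalance E A v| ≤ 2 := by
  obtain ⟨A, hAE, hmin⟩ := exists_min_image E.powerset (potential E) ⟨E, mem_powerset_self E⟩
  have hA := mem_powerset.1 hAE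
  refine ⟨A, hA, fun v => abs_le.2 ⟨?_, ?_⟩⟩
  · by_contra! hv
    obtain ⟨A', hA', hlt⟩ := exists_potential_lt (v := v) hE sdiff_subset
      (by rw [imbalance_sdiff hA]; omega)
    rw [potential_sdiff hA] at hlt
    exact (hmin A' (mem_powerset.2 hA')).not_gt hlt
  · by_contra! hv
    obtain ⟨A', hA', hlt⟩ := exists_potential_lt (v := v) hE hA (by omega)
    exact (hmin A' (mem_powerset.2 hA')).not_gt hlt

theorem exists_split_edgeDegree_le (hE : ∀ e ∈ E, ¬e.IsDiag) :
    ∃ A ⊆ E, ∀ v, edgeDegree A v ≤ edgeDegree E v / 2 + 1 ∧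
      edgeDegree (E \ A) v ≤ edgeDegree E v / 2 + 1 := by
  obtain ⟨A, hA, hbal⟩ := exists_imbalance_le_two hE
  refine ⟨A, hA, fun v => ?_⟩
  have hsum := edgeDegree_sdiff_add hA v
  have hv := abs_le.1 (hbal v)
  simp only [imbalance] at hv
  omega

lemma exists_bool_refinement {ι : Type*} [Fintype ι] (P : ι → Finset (Sym2 V))
    (hPd : Pairwise (Disjoint on P)) (hP : ∀ i, ∀ e ∈ P i, ¬e.IsDiag) {D : ℕ}
    (hD : ∀ i v, edgeDegree (P i) v ≤ D) :
    ∃ Q : ι × Bool → Finset (Sym2 V), Pairwise (Disjoint on Q) ∧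
      univ.biUnion Q = univ.biUnion P ∧ ∀ j v, edgeDegree (Q j) v ≤ D / 2 + 1 := by
  choose A hAP hA using fun i => exists_split_edgeDegree_le (hP i)
  set Q : ι × Bool → Finset (Sym2 V) := fun j => if j.2 then A j.1 else P j.1 \ A j.1
  have hQP : ∀ j, Q j ⊆ P j.1 := fun ⟨i, b⟩ => by cases b <;> simp [Q, hAP]
  refine ⟨Q, ?_, ?_, fun ⟨i, b⟩ v => ?_⟩
  · rintro ⟨i, b⟩ ⟨i', b'⟩ hne
    by_cases hi : i = i'
    · subst hi
      have hb : b ≠ b' := fun hb => hne (by rw [hb])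
      cases b <;> cases b' <;> simp only [ne_eq, not_true_eq_false, onFun, Q] at hb ⊢
      · exact sdiff_disjoint
      · exact disjoint_sdiff
    · exact (hPd hi).mono (hQP _) (hQP _)
  · ext e
    simp only [mem_biUnion, mem_univ, true_and, Prod.exists]
    refine ⟨fun ⟨i, _, he⟩ => ⟨i, hQP _ he⟩, fun ⟨i, he⟩ => ?_⟩
    by_cases heA : e ∈ A i
    · exact ⟨i, true, by simpa [Q] using heA⟩
    · exact ⟨i, false, by simpa [Q] using ⟨he, heA⟩⟩
  · have hDi : edgeDegree (P i) v / 2 + 1 ≤ D / 2 + 1 := by gcongr; exact hD i v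
    cases b
    · exact (hA i v).2.trans hDi
    · exact (hA i v).1.trans hDi

theorem exists_partition_pow_two (hE : ∀ e ∈ E, ¬e.IsDiag) {D : ℕ}
    (hD : ∀ v, edgeDegree E v ≤ D) (h : ℕ) :
    ∃ P : Fin (2 ^ h) → Finset (Sym2 V), Pairwise (Disjoint on P) ∧
      univ.biUnion P = E ∧ ∀ i v, edgeDegree (P i) v ≤ D / 2 ^ h + 2 := by
  induction h with
  | zero =>
    refine ⟨fun _ => E, fun i j hij => absurd (Subsingleton.elim (α := Fin 1) i j) hij, by simp,
      fun _ v => ?_⟩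
    simpa using (hD v).trans (Nat.le_add_right D 2)
  | succ h ih =>
    obtain ⟨P, hPd, hPE, hPD⟩ := ih
    have hP : ∀ i, ∀ e ∈ P i, ¬e.IsDiag := fun i e he =>
      hE e (hPE ▸ subset_biUnion_of_mem P (mem_univ i) he)
    obtain ⟨Q, hQd, hQP, hQD⟩ := exists_bool_refinement P hPd hP hPD
    let idx : Fin (2 ^ (h + 1)) ≃ Fin (2 ^ h) × Bool :=
      (finCongr (pow_succ 2 h)).trans (finProdFinEquiv.symm.trans
        (Equiv.prodCongr (Equiv.refl _) finTwoEquiv))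
    refine ⟨Q ∘ idx, hQd.comp_of_injective idx.injective, ?_, fun j v => (hQD (idx j) v).trans ?_⟩
    · rw [← hPE, ← hQP]
      ext e
      simp only [mem_biUnion, mem_univ, true_and, comp_apply]
      exact (idx.surjective.exists (p := fun j => e ∈ Q j)).symm
    · rw [pow_succ, ← Nat.div_div_eq_div_mul]
      omega

end EdgePartition

/-- For every finite simple graph `G` with maximum degree `Δ` and
every integer `h ≥ 0`, the edge set of `G` can be partitioned into `2^h` sets
`E_1, …, E_{2^h}` such that every subgraph `(V, E_j)` has maximum degree at most
`⌊Δ/2^h⌋ + 2`. -/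
theorem stmt_14 {V : Type*} [Fintype V] [DecidableEq V] (G : SimpleGraph V)
    [DecidableRel G.Adj] (Δ h : ℕ) (hΔ : G.maxDegree = Δ) :
    ∃ E : Fin (2 ^ h) → Finset (Sym2 V),
      (∀ i j, i ≠ j → Disjoint (E i) (E j)) ∧
      (Finset.univ.biUnion E = G.edgeFinset) ∧
      (∀ i, ∀ v : V, ((E i).filter (fun e => v ∈ e)).card ≤ Δ / 2 ^ h + 2) := by
  have hloop : ∀ e ∈ G.edgeFinset, ¬e.IsDiag := fun _ he =>
    G.not_isDiag_of_mem_edgeSet (SimpleGraph.mem_edgeFinset.1 he)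
  have hdeg : ∀ v, EdgePartition.edgeDegree G.edgeFinset v ≤ Δ := fun v => by
    rw [EdgePartition.edgeDegree, ← G.incidenceFinset_eq_filter, G.card_incidenceFinset_eq_degree,
      ← hΔ]
    exact G.degree_le_maxDegree v
  obtain ⟨P, hPd, hPE, hPD⟩ := EdgePartition.exists_partition_pow_two hloop hdeg h
  exact ⟨P, fun _ _ hij => hPd hij, hPE, hPD⟩
end

section
/- Let q be a prime and d, Δ positive integers with q > Δ·d. For each polynomial p of degree at most d over the field GF(q), let S_p = {(i, p(i)) : i ∈ GF(q)} ⊆ GF(q) × GF(q). Then the family {S_p : p a polynomial of degree at most d over GF(q)}, which consists of q^{d+1} distinct sets of size q each over a groundset of size q², is Δ-union-free: for every polynomial p_0 and every Δ polynomials p_1, …, p_Δ, each distinct from p_0, one has S_{p_0} ⊄ S_{p_1} ∪ … ∪ S_{p_Δ}. -/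
/-!
Two distinct polynomials of degree at most `d` agree in at most `d` points, so `Δ` graphs
`S_{p_1}, …, S_{p_Δ}` meet `S_{p₀}` in at most `Δ·d < q` points and cannot cover it.
-/

open Polynomial Finset

namespace Polynomial

variable {R : Type*}

theorem card_natDegree_le [CommRing R] [Finite R] (d : ℕ) :
    Nat.card {p : R[X] // p.natDegree ≤ d} = Nat.card R ^ (d + 1) := by
  have e : {p : R[X] // p.natDegree ≤ d} ≃ degreeLT R (d + 1) :=
    Equiv.subtypeEquivRight fun p => by
      rw [degreeLT_succ_eq_degreeLE, mem_degreeLE, natDegree_le_iff_degree_le]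
  rw [Nat.card_congr (e.trans (degreeLTEquiv R (d + 1)).toEquiv), Nat.card_fun, Nat.card_fin]

theorem card_le_of_forall_mem_exists_eval_eq [CommRing R] [IsDomain R] {ι : Type*} [Fintype ι]
    {d : ℕ} {p₀ : R[X]} {ps : ι → R[X]} (h₀ : p₀.natDegree ≤ d) (hps : ∀ j, (ps j).natDegree ≤ d)
    (hne : ∀ j, ps j ≠ p₀) (s : Finset R) (hs : ∀ x ∈ s, ∃ j, (ps j).eval x = p₀.eval x) :
    #s ≤ Fintype.card ι * d := by
  classical
  have hsub : s ⊆ univ.biUnion fun j => (p₀ - ps j).roots.toFinset := fun x hx => by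
    obtain ⟨j, hj⟩ := hs x hx
    refine mem_biUnion.mpr ⟨j, mem_univ _, ?_⟩
    rw [Multiset.mem_toFinset, mem_roots (sub_ne_zero.mpr (hne j).symm), IsRoot, eval_sub, hj,
      sub_self]
  have hroots (j : ι) : #(p₀ - ps j).roots.toFinset ≤ d :=
    calc #(p₀ - ps j).roots.toFinset ≤ Multiset.card (p₀ - ps j).roots :=
          Multiset.toFinset_card_le _
      _ ≤ (p₀ - ps j).natDegree := card_roots' _
      _ ≤ d := (natDegree_sub_le _ _).trans (max_le h₀ (hps j))
  calc #s ≤ #(univ.biUnion fun j => (p₀ - ps j).roots.toFinset) := card_le_card hsub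
    _ ≤ ∑ j, #(p₀ - ps j).roots.toFinset := card_biUnion_le
    _ ≤ ∑ _j : ι, d := sum_le_sum fun j _ => hroots j
    _ = Fintype.card ι * d := by rw [sum_const, card_univ, smul_eq_mul]

/-- The set `S_p = {(x, p(x))}`. -/
def graph [CommRing R] (p : R[X]) : Set (R × R) :=
  Set.range fun x => (x, p.eval x)

section Graph

variable [CommRing R] {p : R[X]}

theorem mem_graph {z : R × R} : z ∈ p.graph ↔ p.eval z.1 = z.2 :=
  ⟨by rintro ⟨x, rfl⟩; rfl, fun h => ⟨z.1, Prod.ext rfl h⟩⟩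

theorem ncard_graph [Finite R] (p : R[X]) : p.graph.ncard = Nat.card R := by
  rw [graph, ← Set.image_univ, Set.ncard_image_of_injective _ fun _ _ h => congrArg Prod.fst h,
    Set.ncard_univ]

theorem graph_subset_iUnion_graph_iff {ι : Type*} {ps : ι → R[X]} :
    p.graph ⊆ ⋃ j, (ps j).graph ↔ ∀ x, ∃ j, (ps j).eval x = p.eval x := by
  rw [graph, Set.range_subset_iff]
  simp only [Set.mem_iUnion, mem_graph]

theorem eq_of_graph_eq [IsDomain R] [Finite R] {q : R[X]} (hp : p.natDegree < Nat.card R)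
    (hq : q.natDegree < Nat.card R) (h : p.graph = q.graph) : p = q := by
  have := Fintype.ofFinite R
  refine eq_of_natDegree_lt_card_of_eval_eq p q Function.injective_id (fun x => ?_) ?_
  · exact (mem_graph.mp (h ▸ Set.mem_range_self x : (x, p.eval x) ∈ q.graph)).symm
  · rw [← Nat.card_eq_fintype_card]
    exact max_lt hp hq

theorem not_graph_subset_iUnion_graph [IsDomain R] [Finite R] {ι : Type*} [Fintype ι] {d : ℕ}
    {ps : ι → R[X]} (hp : p.natDegree ≤ d) (hps : ∀ j, (ps j).natDegree ≤ d)
    (hne : ∀ j, ps j ≠ p) (hcard : Fintype.card ι * d < Nat.card R) :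
    ¬ p.graph ⊆ ⋃ j, (ps j).graph := by
  have := Fintype.ofFinite R
  intro hsub
  have := card_le_of_forall_mem_exists_eval_eq hp hps hne univ fun x _ =>
    graph_subset_iUnion_graph_iff.mp hsub x
  rw [card_univ, ← Nat.card_eq_fintype_card] at this
  omega

end Graph

end Polynomial

theorem stmt_17_general (q d Δ : ℕ) (hq : q.Prime) (hΔ : 0 < Δ)
    (hqd : Δ * d < q) :
    (∀ p₁ p₂ : Polynomial (ZMod q), p₁.natDegree ≤ d → p₂.natDegree ≤ d →
      Set.range (fun x : ZMod q => (x, p₁.eval x)) =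
        Set.range (fun x : ZMod q => (x, p₂.eval x)) → p₁ = p₂) ∧
    (∀ p : Polynomial (ZMod q),
      (Set.range (fun x : ZMod q => (x, p.eval x))).ncard = q) ∧
    (Nat.card {p : Polynomial (ZMod q) // p.natDegree ≤ d} = q ^ (d + 1)) ∧
    (∀ (p₀ : Polynomial (ZMod q)) (ps : Fin Δ → Polynomial (ZMod q)),
      p₀.natDegree ≤ d → (∀ j, (ps j).natDegree ≤ d) → (∀ j, ps j ≠ p₀) →
      ¬ Set.range (fun x : ZMod q => (x, p₀.eval x)) ⊆
          ⋃ j, Set.range (fun x : ZMod q => (x, (ps j).eval x))) := by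
  have : Fact q.Prime := ⟨hq⟩
  have hcard : Nat.card (ZMod q) = q := Nat.card_zmod q
  have hdq : d < Nat.card (ZMod q) := hcard.symm ▸ (Nat.le_mul_of_pos_left d hΔ).trans_lt hqd
  refine ⟨fun p₁ p₂ h₁ h₂ => eq_of_graph_eq (h₁.trans_lt hdq) (h₂.trans_lt hdq),
    fun p => (ncard_graph p).trans hcard, by rw [card_natDegree_le, hcard],
    fun p₀ ps h₀ hps hne => not_graph_subset_iUnion_graph h₀ hps hne ?_⟩
  rwa [Fintype.card_fin, hcard]

/-- **Erdős–Frankl–Füredi construction.** Let `q` be a prime and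
`d, Δ > 0` with `q > Δ·d`. For each polynomial `p` of degree at most `d` over `GF(q)`,
let `S_p = {(i, p(i)) : i ∈ GF(q)}`. Then: the map `p ↦ S_p` is injective on polynomials
of degree at most `d` (so the family has `q^{d+1}` distinct members), each set `S_p` has
size `q` (over the groundset `GF(q) × GF(q)` of size `q²`), and the family is
`Δ`-union-free: no `S_{p₀}` is contained in the union of `Δ` sets `S_{p_1}, …, S_{p_Δ}`
with all `p_i` distinct from `p₀`. -/
theorem stmt_17 (q d Δ : ℕ) (hq : q.Prime) (hd : 0 < d) (hΔ : 0 < Δ)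
    (hqd : Δ * d < q) :
    (∀ p₁ p₂ : Polynomial (ZMod q), p₁.natDegree ≤ d → p₂.natDegree ≤ d →
      Set.range (fun x : ZMod q => (x, p₁.eval x)) =
        Set.range (fun x : ZMod q => (x, p₂.eval x)) → p₁ = p₂) ∧
    (∀ p : Polynomial (ZMod q),
      (Set.range (fun x : ZMod q => (x, p.eval x))).ncard = q) ∧
    (Nat.card {p : Polynomial (ZMod q) // p.natDegree ≤ d} = q ^ (d + 1)) ∧
    (∀ (p₀ : Polynomial (ZMod q)) (ps : Fin Δ → Polynomial (ZMod q)),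
      p₀.natDegree ≤ d → (∀ j, (ps j).natDegree ≤ d) → (∀ j, ps j ≠ p₀) →
      ¬ Set.range (fun x : ZMod q => (x, p₀.eval x)) ⊆
          ⋃ j, Set.range (fun x : ZMod q => (x, (ps j).eval x))) :=
  stmt_17_general q d Δ hq hΔ hqd
end

section
/- Let G be a finite simple graph with maximum degree Δ, let φ : V → {1, …, N} be a proper vertex-coloring of G, and let S_1, …, S_N be subsets of {1, …, m} forming a Δ-union-free family: for every index c_0 and every Δ indices c_1, …, c_Δ with c_i ≠ c_0 for all i, S_{c_0} ⊄ S_{c_1} ∪ … ∪ S_{c_Δ}. Then every vertex v can be assigned a color ψ(v) ∈ S_{φ(v)} \ ∪_{u ∈ N(v)} S_{φ(u)}, and every such assignment ψ : V → {1, …, m} is a proper vertex-coloring of G. In particular, G admits a proper m-vertex-coloring. -/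
/-! A vertex `v` has at most `Δ` neighbours, all of colours different from `φ v`, so the
union-free property leaves an element of `S (φ v)` outside every `S (φ u)` with `u` a
neighbour of `v`. Two adjacent vertices `u, v` cannot then receive the same element, since
`ψ u ∈ S (φ u)` while `ψ v ∉ S (φ u)`. -/

open Finset

theorem exists_mem_forall_notMem_of_unionFree {ι α : Type*} [DecidableEq α]
    {S : ι → Finset α} {Δ : ℕ}
    (hUF : ∀ (c₀ : ι) (cs : Fin Δ → ι), (∀ j, cs j ≠ c₀) →
      ¬ S c₀ ⊆ univ.biUnion (fun j => S (cs j)))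
    (hι : 0 < Δ → Nontrivial ι) {c₀ : ι} {T : Finset ι} (hT : #T ≤ Δ) (hc₀ : c₀ ∉ T) :
    ∃ x ∈ S c₀, ∀ c ∈ T, x ∉ S c := by
  -- list `T` in the first `#T` slots and pad the remaining ones with any index other than `c₀`
  let pad : Fin Δ → ι := fun j => haveI := hι j.pos; (exists_ne c₀).choose
  let cs : Fin Δ → ι := fun j => if h : j.val < #T then T.equivFin.symm ⟨j, h⟩ else pad j
  have hcs : ∀ j, cs j ≠ c₀ := by
    intro j
    by_cases h : j.val < #T
    · simpa [cs, h] using ne_of_mem_of_not_mem (T.equivFin.symm ⟨j, h⟩).2 hc₀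
    · simpa [cs, h] using haveI := hι j.pos; (exists_ne c₀).choose_spec
  have hT_sub : ∀ c ∈ T, ∃ j, cs j = c := fun c hc =>
    ⟨Fin.castLE hT (T.equivFin ⟨c, hc⟩), by simp [cs]⟩
  obtain ⟨x, hx, hx_notMem⟩ := not_subset.mp (hUF c₀ cs hcs)
  refine ⟨x, hx, fun c hc hxc => hx_notMem ?_⟩
  obtain ⟨j, rfl⟩ := hT_sub c hc
  exact mem_biUnion.mpr ⟨j, mem_univ j, hxc⟩

theorem SimpleGraph.nontrivial_of_maxDegree_pos {V ι : Type*} [Fintype V] {G : SimpleGraph V}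
    [DecidableRel G.Adj] {φ : V → ι} (hφ : ∀ u v : V, G.Adj u v → φ u ≠ φ v)
    (hG : 0 < G.maxDegree) : Nontrivial ι := by
  obtain ⟨u, v, huv⟩ := ne_bot_iff_exists_adj.mp fun h => hG.ne' (maxDegree_eq_zero_iff.mpr h)
  exact nontrivial_of_ne _ _ (hφ u v huv)

theorem stmt_18_general {V : Type*} [Fintype V] (G : SimpleGraph V)
    [DecidableRel G.Adj] (Δ N m : ℕ) (hΔ : G.maxDegree = Δ)
    (φ : V → Fin N) (hφ : ∀ u v : V, G.Adj u v → φ u ≠ φ v)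
    (S : Fin N → Finset (Fin m))
    (hUF : ∀ (c₀ : Fin N) (cs : Fin Δ → Fin N), (∀ j, cs j ≠ c₀) →
      ¬ S c₀ ⊆ Finset.univ.biUnion (fun j => S (cs j))) :
    (∀ v : V, ∃ x : Fin m, x ∈ S (φ v) ∧ ∀ u : V, G.Adj v u → x ∉ S (φ u)) ∧
    (∀ ψ : V → Fin m,
      (∀ v : V, ψ v ∈ S (φ v) ∧ ∀ u : V, G.Adj v u → ψ v ∉ S (φ u)) →
      ∀ u v : V, G.Adj u v → ψ u ≠ ψ v) := by
  subst hΔ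
  refine ⟨fun v => ?_, fun ψ hψ u v huv hψuv => (hψ v).2 u huv.symm (hψuv ▸ (hψ u).1)⟩
  have hcard : #((G.neighborFinset v).image φ) ≤ G.maxDegree :=
    card_image_le.trans ((G.card_neighborFinset_eq_degree v).trans_le (G.degree_le_maxDegree v))
  have hφv : φ v ∉ (G.neighborFinset v).image φ := by
    simpa using fun u huv => (hφ v u huv).symm
  obtain ⟨x, hx, hx_notMem⟩ := exists_mem_forall_notMem_of_unionFree hUF
    (G.nontrivial_of_maxDegree_pos hφ) hcard hφv
  exact ⟨x, hx, fun u huv => hx_notMem (φ u) (mem_image_of_mem φ (by simpa using huv))⟩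

/-- **Linial's color reduction via union-free families.** Let `G` have
maximum degree `Δ`, let `φ` be a proper vertex-coloring of `G` with `N` colors, and let
`S_1, …, S_N ⊆ {1, …, m}` be a `Δ`-union-free family: for every index `c₀` and every
`Δ` indices `c_1, …, c_Δ`, all distinct from `c₀`, `S_{c₀}` is not contained in
`S_{c_1} ∪ … ∪ S_{c_Δ}`. Then every vertex `v` can be assigned a color
`ψ v ∈ S_{φ v} \ ⋃_{u ∈ N(v)} S_{φ u}`, and every such assignment `ψ` is a proper
vertex-coloring of `G` with `m` colors. -/
theorem stmt_18 {V : Type*} [Fintype V] [DecidableEq V] (G : SimpleGraph V)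
    [DecidableRel G.Adj] (Δ N m : ℕ) (hΔ : G.maxDegree = Δ)
    (φ : V → Fin N) (hφ : ∀ u v : V, G.Adj u v → φ u ≠ φ v)
    (S : Fin N → Finset (Fin m))
    (hUF : ∀ (c₀ : Fin N) (cs : Fin Δ → Fin N), (∀ j, cs j ≠ c₀) →
      ¬ S c₀ ⊆ Finset.univ.biUnion (fun j => S (cs j))) :
    (∀ v : V, ∃ x : Fin m, x ∈ S (φ v) ∧ ∀ u : V, G.Adj v u → x ∉ S (φ u)) ∧
    (∀ ψ : V → Fin m,
      (∀ v : V, ψ v ∈ S (φ v) ∧ ∀ u : V, G.Adj v u → ψ v ∉ S (φ u)) →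
      ∀ u v : V, G.Adj u v → ψ u ≠ ψ v) :=
  stmt_18_general G Δ N m hΔ φ hφ S hUF
end

section
/- Let G be a finite simple graph with maximum degree Δ, let φ : V → {1, …, N} be a D-defective vertex-coloring of G, and let S_1, …, S_N be nonempty subsets of {1, …, m} with the following cover-free property: for every index c_0 and every list of at most Δ indices c_1, …, c_Δ (repetitions allowed), each distinct from c_0, there exists an element x ∈ S_{c_0} that belongs to fewer than ρ of the sets S_{c_1}, …, S_{c_Δ} (counted with multiplicity). Then G admits a (D + ρ)-defective vertex-coloring ψ : V → {1, …, m}; indeed it suffices that each vertex v choose ψ(v) to be an element of S_{φ(v)} belonging to fewer than ρ of the sets S_{φ(u)} taken over neighbors u of v with φ(u) ≠ φ(v). -/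
/-!
Each vertex `v` sees at most `Δ` colors `φ u ≠ φ v` among its neighbours, so the cover-free
property lets `v` pick `ψ v ∈ S (φ v)` lying in fewer than `ρ` of their sets. A neighbour `u` with
`ψ u = ψ v` either has `φ u = φ v` (at most `D` of these) or has `ψ v = ψ u ∈ S (φ u)` with
`φ u ≠ φ v` (fewer than `ρ` of these).
-/

open Finset

def IsCoverFree {α β : Type*} [DecidableEq β] (S : α → Finset β) (Δ ρ : ℕ) : Prop :=
  ∀ (c₀ : α) (l : Multiset α), Multiset.card l ≤ Δ → (∀ c ∈ l, c ≠ c₀) →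
    ∃ x ∈ S c₀, l.countP (fun c => x ∈ S c) < ρ

section Coloring

variable {V α β : Type*} [DecidableEq β] {φ : V → α} {S : α → Finset β}
  {Δ ρ : ℕ}

theorem IsCoverFree.exists_mem_card_filter_lt (hCF : IsCoverFree S Δ ρ) (c₀ : α)
    {T : Finset V} (hT : #T ≤ Δ) (hne : ∀ u ∈ T, φ u ≠ c₀) :
    ∃ x ∈ S c₀, #(T.filter fun u => x ∈ S (φ u)) < ρ := by
  have hne' : ∀ c ∈ T.val.map φ, c ≠ c₀ := by
    intro c hc
    obtain ⟨u, hu, rfl⟩ := Multiset.mem_map.mp hc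
    exact hne u hu
  obtain ⟨x, hx, hlt⟩ := hCF c₀ (T.val.map φ) (by simpa using hT) hne'
  exact ⟨x, hx, by rwa [Multiset.countP_map] at hlt⟩

theorem card_filter_eq_le_add_card_filter_ne [DecidableEq α] (s : Finset V) (ψ : V → β) (v : V)
    (hψ : ∀ u ∈ s, ψ u ∈ S (φ u)) :
    #(s.filter fun u => ψ u = ψ v) ≤
      #(s.filter fun u => φ u = φ v) + #(s.filter fun u => φ u ≠ φ v ∧ ψ v ∈ S (φ u)) := by
  rw [← card_filter_add_card_filter_not (s := s.filter fun u => ψ u = ψ v) (fun u => φ u = φ v),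
    filter_filter, filter_filter]
  refine add_le_add (card_le_card fun u hu => ?_) (card_le_card fun u hu => ?_) <;>
    simp only [mem_filter] at hu ⊢
  · exact ⟨hu.1, hu.2.2⟩
  · exact ⟨hu.1, hu.2.2, hu.2.1 ▸ hψ u hu.1⟩

end Coloring

theorem stmt_19_general {V : Type*} [Fintype V] (G : SimpleGraph V)
    [DecidableRel G.Adj] (Δ N m D ρ : ℕ) (hΔ : G.maxDegree = Δ)
    (φ : V → Fin N)
    (hdef : ∀ v : V, ((G.neighborFinset v).filter (fun u => φ u = φ v)).card ≤ D)
    (S : Fin N → Finset (Fin m))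
    (hCF : ∀ (c₀ : Fin N) (l : Multiset (Fin N)), Multiset.card l ≤ Δ →
      (∀ c ∈ l, c ≠ c₀) →
      ∃ x ∈ S c₀, l.countP (fun c => x ∈ S c) < ρ) :
    (∃ ψ : V → Fin m, ∀ v : V, ψ v ∈ S (φ v) ∧
      ((G.neighborFinset v).filter (fun u => φ u ≠ φ v ∧ ψ v ∈ S (φ u))).card < ρ) ∧
    (∀ ψ : V → Fin m,
      (∀ v : V, ψ v ∈ S (φ v) ∧
        ((G.neighborFinset v).filter (fun u => φ u ≠ φ v ∧ ψ v ∈ S (φ u))).card < ρ) →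
      ∀ v : V, ((G.neighborFinset v).filter (fun u => ψ u = ψ v)).card ≤ D + ρ) := by
  constructor
  · have hchoice (v : V) : ∃ x ∈ S (φ v),
        #((G.neighborFinset v).filter fun u => φ u ≠ φ v ∧ x ∈ S (φ u)) < ρ := by
      have hdeg : #((G.neighborFinset v).filter fun u => φ u ≠ φ v) ≤ Δ :=
        calc _ ≤ G.degree v := card_filter_le _ _
          _ ≤ Δ := hΔ ▸ G.degree_le_maxDegree v
      simpa only [filter_filter] using IsCoverFree.exists_mem_card_filter_lt hCF (φ v)
        hdeg (fun u hu => (mem_filter.mp hu).2)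
    choose ψ hψ using hchoice
    exact ⟨ψ, hψ⟩
  · intro ψ hψ v
    calc _ ≤ _ := card_filter_eq_le_add_card_filter_ne (G.neighborFinset v) ψ v
            fun u _ => (hψ u).1
      _ ≤ D + ρ := add_le_add (hdef v) (hψ v).2.le

/-- **defective color reduction via cover-free families.** Let `G` have
maximum degree `Δ`, let `φ` be a `D`-defective vertex-coloring with `N` colors, and let
`S_1, …, S_N` be nonempty subsets of `{1, …, m}` with the cover-free property: for every
index `c₀` and every multiset of at most `Δ` indices (repetitions allowed), all distinct
from `c₀`, there is an element of `S_{c₀}` lying in fewer than `ρ` of the corresponding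
sets (counted with multiplicity). Then `G` admits a `(D + ρ)`-defective vertex-coloring
`ψ` with `m` colors; indeed, a suitable choice `ψ v ∈ S_{φ v}` (belonging to fewer than
`ρ` of the sets `S_{φ u}` over neighbors `u` of `v` with `φ u ≠ φ v`) always exists,
and every such choice is `(D + ρ)`-defective. -/
theorem stmt_19 {V : Type*} [Fintype V] [DecidableEq V] (G : SimpleGraph V)
    [DecidableRel G.Adj] (Δ N m D ρ : ℕ) (hΔ : G.maxDegree = Δ)
    (φ : V → Fin N)
    (hdef : ∀ v : V, ((G.neighborFinset v).filter (fun u => φ u = φ v)).card ≤ D)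
    (S : Fin N → Finset (Fin m)) (hS : ∀ c, (S c).Nonempty)
    (hCF : ∀ (c₀ : Fin N) (l : Multiset (Fin N)), Multiset.card l ≤ Δ →
      (∀ c ∈ l, c ≠ c₀) →
      ∃ x ∈ S c₀, l.countP (fun c => x ∈ S c) < ρ) :
    (∃ ψ : V → Fin m, ∀ v : V, ψ v ∈ S (φ v) ∧
      ((G.neighborFinset v).filter (fun u => φ u ≠ φ v ∧ ψ v ∈ S (φ u))).card < ρ) ∧
    (∀ ψ : V → Fin m,
      (∀ v : V, ψ v ∈ S (φ v) ∧
        ((G.neighborFinset v).filter (fun u => φ u ≠ φ v ∧ ψ v ∈ S (φ u))).card < ρ) →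
      ∀ v : V, ((G.neighborFinset v).filter (fun u => ψ u = ψ v)).card ≤ D + ρ) :=
  stmt_19_general G Δ N m D ρ hΔ φ hdef S hCF
end
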